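/- arXiv:cs/0508024 — 3 statements merged into one kernel-verified Lean document; each statement's English description precedes it below -/
import Mathlib

section
/- Let q be even, let J = {j_0,...,j_{k-1}} and I = {i_0,...,i_{m-k-1}} partition {0,1,...,m-1}, write x = (x_{j_0},...,x_{j_{k-1}}), and let d ∈ Z_2^k. Let f : Z_2^m → Z_q be a generalized Boolean function such that the restricted function f|_{x=d} equals (q/2)·Σ_{α=0}^{m-k-2} x_{π(α)} x_{π(α+1)} + Σ_{α=0}^{m-k-1} c_α x_{i_α} + c, where c_0,...,c_{m-k-1}, c ∈ Z_q and π is a bijection from {0,1,...,m-k-1} onto I. Let a be either π(0) or π(m-k-1), let c' ∈ Z_q, and let F and F' be the polyphase vectors associated with f and with f + (q/2)x_a + c', respectively. Then F|_{x=d} and F'|_{x=d} form a Golay complementary pair: A(F|_{x=d})(ℓ) + A(F'|_{x=d})(ℓ) = 0 for all ℓ ≠ 0. -/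
open Finset

/-- Aperiodic cross-correlation of two length-`n` complex sequences at integer displacement `ℓ`. -/
noncomputable def crossCorr (n : ℕ) (A B : ℕ → ℂ) (ℓ : ℤ) : ℂ :=
  ∑ i ∈ Finset.range n, ∑ j ∈ Finset.range n,
    if (i : ℤ) = (j : ℤ) + ℓ then A i * (starRingEnd ℂ) (B j) else 0

/-- Aperiodic autocorrelation. -/
noncomputable def autoCorr (n : ℕ) (A : ℕ → ℂ) (ℓ : ℤ) : ℂ := crossCorr n A A ℓ

/-- The binary expansion of `i`, as a point of `ℤ₂^m`. -/
def bits (m : ℕ) (i : ℕ) : Fin m → ZMod 2 := fun j => if Nat.testBit i j.val then 1 else 0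

/-- The polyphase vector `F = ξ^f` associated with `f : ℤ₂^m → ℤ_q`, `ξ = e^{2π√-1/q}`. -/
noncomputable def polyVec {q : ℕ} (m : ℕ) (f : (Fin m → ZMod 2) → ZMod q) : ℕ → ℂ :=
  fun i => Complex.exp (2 * Real.pi * Complex.I * ((f (bits m i)).val : ℂ) / (q : ℂ))

/-- The restriction `F|_{x = d}` of a vector of length `2^m` in the variables `x_{jJ b}`. -/
noncomputable def restrictVec (m k : ℕ) (jJ : Fin k → Fin m) (d : Fin k → ZMod 2)
    (F : ℕ → ℂ) : ℕ → ℂ :=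
  fun i => if ∀ b : Fin k, bits m i (jJ b) = d b then F i else 0

/-!
The sum `A(F|_{x=d})(ℓ) + A(F'|_{x=d})(ℓ)` runs over the pairs `i - j = ℓ` in the support of the
restriction, with terms `ξ^{f_i - f_j} (1 + (-1)^{i_a + j_a})`, so only the pairs agreeing in
`x_a = x_{π 0}` survive. For such a pair let `v ≥ 1` be the first position along the path `π`
where `i` and `j` differ. Flipping the bit `x_{π (v-1)}` in both `i` and `j` preserves `i - j`,
the support, the agreement in `x_a` and `v`, and it changes `f_i - f_j` by `q/2`: of the two path
edges at `π (v-1)` only the one to `π v` sees a difference between `i` and `j`. This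
sign-reversing involution makes the sum vanish. Reversing the path handles `a = π (m-k-1)`.
-/

open ComplexConjugate

namespace Nat

theorem xor_two_pow_eq (i P : ℕ) : i ^^^ 2 ^ P = 2 ^ P * (i / 2 ^ P ^^^ 1) + i % 2 ^ P := by
  have h := (Nat.div_add_mod (i ^^^ 2 ^ P) (2 ^ P)).symm
  rwa [xor_div_two_pow, xor_mod_two_pow, Nat.div_self (Nat.two_pow_pos P), Nat.mod_self,
    Nat.xor_zero] at h

theorem xor_one_sub_xor_one {a b : ℕ} (h : a % 2 = b % 2) :
    ((a ^^^ 1 : ℕ) : ℤ) - (b ^^^ 1 : ℕ) = a - b := by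
  rcases Nat.even_or_odd a with ha | ha
  · have hb : Even b := by rw [even_iff] at ha ⊢; omega
    rw [xor_one_of_even ha, xor_one_of_even hb]; push_cast; ring
  · have hb : Odd b := by rw [odd_iff] at ha ⊢; omega
    have ha0 := ha.pos
    have hb0 := hb.pos
    rw [xor_one_of_odd ha, xor_one_of_odd hb]
    omega

theorem xor_two_pow_sub_xor_two_pow {i j P : ℕ} (h : i.testBit P = j.testBit P) :
    ((i ^^^ 2 ^ P : ℕ) : ℤ) - (j ^^^ 2 ^ P : ℕ) = i - j := by
  simp only [testBit_eq_decide_div_mod_eq, decide_eq_decide] at h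
  have hhigh := xor_one_sub_xor_one (by omega : i / 2 ^ P % 2 = j / 2 ^ P % 2)
  rw [xor_two_pow_eq i, xor_two_pow_eq j]
  conv_rhs => rw [← Nat.div_add_mod i (2 ^ P), ← Nat.div_add_mod j (2 ^ P)]
  simp only [Nat.cast_add, Nat.cast_mul, Nat.cast_pow, Nat.cast_ofNat]
  linear_combination (2 ^ P : ℤ) * hhigh

theorem xor_two_pow_ne_self (i P : ℕ) : i ^^^ 2 ^ P ≠ i := by
  intro h
  simpa [Nat.xor_comm i] using congrArg (· ^^^ i) h

end Nat

theorem bits_xor_two_pow {m : ℕ} (i : ℕ) (s : Fin m) :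
    bits m (i ^^^ 2 ^ (s : ℕ)) = bits m i + Pi.single s 1 := by
  funext t
  by_cases h : t = s
  · subst h
    simp only [bits, Nat.testBit_xor, Nat.testBit_two_pow_self, Pi.add_apply, Pi.single_eq_same]
    cases i.testBit t <;> decide
  · simp [bits, h, Fin.val_ne_of_ne (Ne.symm h)]

theorem bits_apply_eq_bits_apply_iff {m i j : ℕ} (s : Fin m) :
    bits m i s = bits m j s ↔ i.testBit s = j.testBit s := by
  unfold bits
  cases i.testBit s <;> cases j.testBit s <;> decide

theorem eq_of_bits_eq {m i j : ℕ} (hi : i < 2 ^ m) (hj : j < 2 ^ m) (h : bits m i = bits m j) :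
    i = j := by
  refine Nat.eq_of_testBit_eq fun t => ?_
  by_cases ht : t < m
  · exact (bits_apply_eq_bits_apply_iff ⟨t, ht⟩).mp (congrFun h _)
  · have hpow : 2 ^ m ≤ 2 ^ t := Nat.pow_le_pow_right two_pos (not_lt.mp ht)
    rw [Nat.testBit_lt_two_pow (hi.trans_le hpow), Nat.testBit_lt_two_pow (hj.trans_le hpow)]

section Character

variable {q : ℕ}

theorem half_add_half (hq : Even q) : ((q / 2 : ℕ) : ZMod q) + ((q / 2 : ℕ) : ZMod q) = 0 := by
  rw [← Nat.cast_add, ← two_mul, Nat.two_mul_div_two_of_even hq, ZMod.natCast_self]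

theorem half_mul_natCast_eq_of_cast_eq (hq : Even q) {a b : ℕ} (h : (a : ZMod 2) = b) :
    ((q / 2 : ℕ) : ZMod q) * a = ((q / 2 : ℕ) : ZMod q) * b := by
  rw [ZMod.natCast_eq_natCast_iff'] at h
  rw [← Nat.mod_add_div a 2, ← Nat.mod_add_div b 2, h]
  push_cast
  linear_combination (((a / 2 : ℕ) : ZMod q) - (b / 2 : ℕ)) * half_add_half hq

theorem half_mul_val_sub_half_mul_val (hq : Even q) (u v : ZMod 2) :
    ((q / 2 : ℕ) : ZMod q) * (u.val : ZMod q) - ((q / 2 : ℕ) : ZMod q) * v.val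
      = if u = v then 0 else ((q / 2 : ℕ) : ZMod q) := by
  split_ifs with h
  · rw [h, sub_self]
  obtain ⟨rfl, rfl⟩ | ⟨rfl, rfl⟩ : u = 0 ∧ v = 1 ∨ u = 1 ∧ v = 0 := by revert u v; decide
  · simp only [ZMod.val_zero, ZMod.val_one, Nat.cast_zero, Nat.cast_one]
    linear_combination -half_add_half hq
  · simp only [ZMod.val_zero, ZMod.val_one, Nat.cast_zero, Nat.cast_one, mul_one, mul_zero,
      sub_zero]

variable [NeZero q]

theorem polyVec_mul_conj (m : ℕ) (f : (Fin m → ZMod 2) → ZMod q) (i j : ℕ) :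
    polyVec m f i * conj (polyVec m f j) = ZMod.stdAddChar (f (bits m i) - f (bits m j)) := by
  simp only [polyVec, ← ZMod.toCircle_apply, ← ZMod.stdAddChar_apply]
  rw [← AddChar.map_neg_eq_conj, ← AddChar.map_add_eq_mul, sub_eq_add_neg]

theorem stdAddChar_half (hq : Even q) : ZMod.stdAddChar ((q / 2 : ℕ) : ZMod q) = -1 := by
  have hq0 : (q : ℂ) ≠ 0 := Nat.cast_ne_zero.mpr (NeZero.ne q)
  have hexp : 2 * (Real.pi : ℂ) * Complex.I * ((q / 2 : ℕ) : ℂ) / q = Real.pi * Complex.I := by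
    rw [Nat.cast_div hq.two_dvd two_ne_zero]
    push_cast
    field_simp
  rw [← Int.cast_natCast, ZMod.stdAddChar_coe, Int.cast_natCast, hexp, Complex.exp_pi_mul_I]

theorem stdAddChar_add_stdAddChar_add_half_mul (hq : Even q) (x : ZMod q) (u v : ZMod 2) :
    ZMod.stdAddChar x + ZMod.stdAddChar
        (x + (((q / 2 : ℕ) : ZMod q) * (u.val : ZMod q)
          - ((q / 2 : ℕ) : ZMod q) * (v.val : ZMod q)))
      = if u = v then 2 * ZMod.stdAddChar x else 0 := by
  rw [half_mul_val_sub_half_mul_val hq]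
  split_ifs
  · rw [add_zero, two_mul]
  · rw [AddChar.map_add_eq_mul, stdAddChar_half hq]; ring

end Character

def pathSum {R : Type*} [CommSemiring R] (L : ℕ) (w : ℕ → R) : R :=
  ∑ t ∈ range (L - 1), w t * w (t + 1)

theorem pathSum_reflect {R : Type*} [CommSemiring R] (L : ℕ) (w : ℕ → R) :
    pathSum L (fun t => w (L - 1 - t)) = pathSum L w := by
  rw [pathSum, ← sum_range_reflect]
  refine sum_congr rfl fun t ht => ?_
  rw [mem_range] at ht
  rw [show L - 1 - (L - 1 - 1 - t + 1) = t by omega, show L - 1 - (L - 1 - 1 - t) = t + 1 by omega,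
    mul_comm]

theorem natCast_pathSum_val (L : ℕ) (w : ℕ → ZMod 2) :
    ((pathSum L fun t => (w t).val : ℕ) : ZMod 2) = pathSum L w := by
  simp [pathSum]

theorem pathSum_add_single_sub {R ι : Type*} [CommRing R] [DecidableEq ι] {L p : ℕ} {u : ℕ → ι}
    (hu : Set.InjOn u (Set.Iio L)) (hp : p + 1 < L) {y z : ι → R}
    (hagree : ∀ t < p, y (u t) = z (u t)) :
    pathSum L (fun t => (y + Pi.single (u p) 1 : ι → R) (u t))
        - pathSum L (fun t => (z + Pi.single (u p) 1 : ι → R) (u t))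
      = pathSum L (fun t => y (u t)) - pathSum L (fun t => z (u t))
        + (y (u (p + 1)) - z (u (p + 1))) := by
  have hsingle : ∀ t < L, (Pi.single (u p) 1 : ι → R) (u t) = if t = p then 1 else 0 :=
      fun t ht => by
    by_cases h : t = p
    · simp [h]
    · rw [Pi.single_apply, if_neg (hu.ne ht (Set.mem_Iio.mpr (by omega)) h),
        if_neg h]
  have hterm : ∀ t ∈ range (L - 1),
      (y + Pi.single (u p) 1 : ι → R) (u t) * (y + Pi.single (u p) 1 : ι → R) (u (t + 1))
          - (z + Pi.single (u p) 1 : ι → R) (u t) * (z + Pi.single (u p) 1 : ι → R) (u (t + 1))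
        = y (u t) * y (u (t + 1)) - z (u t) * z (u (t + 1))
          + if t = p then y (u (p + 1)) - z (u (p + 1)) else 0 := by
    intro t ht
    rw [mem_range] at ht
    simp only [Pi.add_apply, hsingle t (by omega), hsingle (t + 1) (by omega)]
    by_cases htp : t = p
    · subst htp
      rw [if_pos rfl, if_neg (by omega), if_pos rfl]
      ring
    · rw [if_neg htp, if_neg htp]
      by_cases ht1 : t + 1 = p
      · rw [if_pos ht1, hagree t (by omega)]
        ring
      · rw [if_neg ht1]
        ring
  simp only [pathSum, ← sum_sub_distrib]
  rw [sum_congr rfl hterm, sum_add_distrib, sum_ite_eq', if_pos (mem_range.mpr (by omega))]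

theorem sum_add_single_sub_sum_add_single {ι α A M : Type*} [DecidableEq ι] [AddZeroClass A]
    [AddCommGroup M] (s : Finset α) (κ : α → ι) (φ : α → A → M) {y z : ι → A} {i : ι}
    (hyz : y i = z i) (b : A) :
    ∑ x ∈ s, φ x ((y + Pi.single i b : ι → A) (κ x))
        - ∑ x ∈ s, φ x ((z + Pi.single i b : ι → A) (κ x))
      = ∑ x ∈ s, φ x (y (κ x)) - ∑ x ∈ s, φ x (z (κ x)) := by
  simp only [← sum_sub_distrib]
  refine sum_congr rfl fun x _ => ?_
  by_cases h : κ x = i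
  · simp [h, hyz]
  · simp [Pi.single_eq_of_ne h]

noncomputable def pathGBF {m : ℕ} (q L : ℕ) (π iI : ℕ → Fin m) (c : ℕ → ZMod q) (c0 : ZMod q)
    (y : Fin m → ZMod 2) : ZMod q :=
  ((q / 2 : ℕ) : ZMod q) * ((pathSum L fun t => (y (π t)).val : ℕ) : ZMod q)
    + ∑ α ∈ range L, c α * ((y (iI α)).val : ZMod q) + c0

theorem pathGBF_reflect {m : ℕ} (q L : ℕ) (π iI : ℕ → Fin m) (c : ℕ → ZMod q) (c0 : ZMod q) :
    pathGBF q L (fun t => π (L - 1 - t)) iI c c0 = pathGBF q L π iI c c0 := by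
  funext y
  rw [pathGBF, pathGBF, pathSum_reflect L fun t => (y (π t)).val]

theorem pathGBF_add_single_sub {m q L p : ℕ} (hq : Even q) {π : ℕ → Fin m}
    (hπ : Set.InjOn π (Set.Iio L)) (iI : ℕ → Fin m) (c : ℕ → ZMod q) (c0 : ZMod q)
    (hp : p + 1 < L) {y z : Fin m → ZMod 2} (hagree : ∀ t ≤ p, y (π t) = z (π t))
    (hne : y (π (p + 1)) ≠ z (π (p + 1))) :
    pathGBF q L π iI c c0 (y + Pi.single (π p) 1) - pathGBF q L π iI c c0 (z + Pi.single (π p) 1)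
      = pathGBF q L π iI c c0 y - pathGBF q L π iI c c0 z + ((q / 2 : ℕ) : ZMod q) := by
  have hpath := pathSum_add_single_sub hπ hp (fun t ht => hagree t ht.le)
  have hone : y (π (p + 1)) - z (π (p + 1)) = 1 := by
    revert hne; generalize y (π (p + 1)) = u; generalize z (π (p + 1)) = v; revert u v; decide
  -- `(q/2) * n` only depends on the parity of `n`, so the path forms are compared in `ZMod 2`.
  have hquad := half_mul_natCast_eq_of_cast_eq hq (a :=
      pathSum L (fun t => ((y + Pi.single (π p) 1 : Fin m → ZMod 2) (π t)).val)
        + pathSum L (fun t => (z (π t)).val))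
    (b := pathSum L (fun t => ((z + Pi.single (π p) 1 : Fin m → ZMod 2) (π t)).val)
        + pathSum L (fun t => (y (π t)).val) + 1) (by
      push_cast [natCast_pathSum_val]
      linear_combination hpath + hone)
  have hlin := sum_add_single_sub_sum_add_single (range L) iI
    (fun α x => c α * ((x : ZMod 2).val : ZMod q)) (hagree p le_rfl) 1
  simp only [pathGBF]
  push_cast at hquad
  linear_combination hquad + hlin

section FirstDiff

variable {ι α : Type*} (u : ℕ → ι)

/-- Junk value: `sInf ∅ = 0` when `y ∘ u = z ∘ u`. -/
noncomputable def firstDiff (y z : ι → α) : ℕ := sInf {t | y (u t) ≠ z (u t)}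

variable {u}

theorem firstDiff_add_right [Add α] [IsRightCancelAdd α] (y z w : ι → α) :
    firstDiff u (y + w) (z + w) = firstDiff u y z := by
  simp [firstDiff]

theorem apply_eq_of_lt_firstDiff {y z : ι → α} {t : ℕ} (h : t < firstDiff u y z) :
    y (u t) = z (u t) :=
  not_not.mp (Nat.notMem_of_lt_sInf h)

theorem firstDiff_le {y z : ι → α} {t : ℕ} (h : y (u t) ≠ z (u t)) : firstDiff u y z ≤ t :=
  Nat.sInf_le h

theorem apply_firstDiff_ne {y z : ι → α} {t : ℕ} (h : y (u t) ≠ z (u t)) :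
    y (u (firstDiff u y z)) ≠ z (u (firstDiff u y z)) :=
  Nat.sInf_mem (s := {t | y (u t) ≠ z (u t)}) ⟨t, h⟩

end FirstDiff

theorem sum_eq_zero_of_xor_two_pow_neg {M : Type*} [AddCommGroup M] {s : Finset (ℕ × ℕ)}
    {g : ℕ × ℕ → M} (P : ℕ × ℕ → ℕ)
    (hmem : ∀ p ∈ s, (p.1 ^^^ 2 ^ P p, p.2 ^^^ 2 ^ P p) ∈ s)
    (hP : ∀ p ∈ s, P (p.1 ^^^ 2 ^ P p, p.2 ^^^ 2 ^ P p) = P p)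
    (hg : ∀ p ∈ s, g (p.1 ^^^ 2 ^ P p, p.2 ^^^ 2 ^ P p) = -g p) :
    ∑ p ∈ s, g p = 0 :=
  sum_involution (fun p _ => (p.1 ^^^ 2 ^ P p, p.2 ^^^ 2 ^ P p))
    (fun p hp => by rw [hg p hp, add_neg_cancel])
    (fun p _ _ h => Nat.xor_two_pow_ne_self p.1 (P p) (congrArg Prod.fst h))
    hmem
    (fun p hp => by simp only [hP p hp, Nat.xor_xor_cancel_right])

theorem autoCorr_add_autoCorr (n : ℕ) (A B : ℕ → ℂ) (ℓ : ℤ) :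
    autoCorr n A ℓ + autoCorr n B ℓ
      = ∑ p ∈ range n ×ˢ range n,
          if (p.1 : ℤ) = p.2 + ℓ then A p.1 * conj (A p.2) + B p.1 * conj (B p.2) else 0 := by
  simp only [autoCorr, crossCorr, sum_product, ← sum_add_distrib]
  refine sum_congr rfl fun i _ => sum_congr rfl fun j _ => ?_
  split_ifs <;> simp

theorem restrictVec_polyVec_mul_conj_add {q m k : ℕ} [NeZero q] (hq : Even q)
    (jJ : Fin k → Fin m) (d : Fin k → ZMod 2) (f : (Fin m → ZMod 2) → ZMod q) (a : Fin m)
    (c' : ZMod q) (i j : ℕ) :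
    restrictVec m k jJ d (polyVec m f) i * conj (restrictVec m k jJ d (polyVec m f) j)
      + restrictVec m k jJ d
          (polyVec m fun y => f y + ((q / 2 : ℕ) : ZMod q) * ((y a).val : ZMod q) + c') i
        * conj (restrictVec m k jJ d
            (polyVec m fun y => f y + ((q / 2 : ℕ) : ZMod q) * ((y a).val : ZMod q) + c') j)
      = if (∀ b, bits m i (jJ b) = d b) ∧ (∀ b, bits m j (jJ b) = d b) ∧ bits m i a = bits m j a
        then 2 * ZMod.stdAddChar (f (bits m i) - f (bits m j)) else 0 := by
  simp only [restrictVec]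
  by_cases hi : ∀ b, bits m i (jJ b) = d b
  · by_cases hj : ∀ b, bits m j (jJ b) = d b
    · simp only [hi, hj, implies_true, true_and, if_true, polyVec_mul_conj]
      rw [← stdAddChar_add_stdAddChar_add_half_mul hq _ (bits m i a) (bits m j a)]
      congr 2
      ring
    · simp [hj]
  · simp [hi]

def golayPairs (m k : ℕ) (jJ : Fin k → Fin m) (d : Fin k → ZMod 2) (a : Fin m) (ℓ : ℤ) :
    Finset (ℕ × ℕ) :=
  {p ∈ range (2 ^ m) ×ˢ range (2 ^ m) | (p.1 : ℤ) = p.2 + ℓ ∧ (∀ b, bits m p.1 (jJ b) = d b) ∧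
    (∀ b, bits m p.2 (jJ b) = d b) ∧ bits m p.1 a = bits m p.2 a}

theorem xor_two_pow_mem_golayPairs {m k : ℕ} {jJ : Fin k → Fin m} {d : Fin k → ZMod 2}
    {a : Fin m} {ℓ : ℤ} {i j : ℕ} (h : (i, j) ∈ golayPairs m k jJ d a ℓ) {s : Fin m}
    (hs : ∀ b, jJ b ≠ s) (hij : bits m i s = bits m j s) :
    (i ^^^ 2 ^ (s : ℕ), j ^^^ 2 ^ (s : ℕ)) ∈ golayPairs m k jJ d a ℓ := by
  simp only [golayPairs, mem_filter, mem_product, mem_range] at h ⊢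
  obtain ⟨⟨hi, hj⟩, hℓ, hdi, hdj, ha⟩ := h
  have hs2 : 2 ^ (s : ℕ) < 2 ^ m := Nat.pow_lt_pow_right one_lt_two s.isLt
  have hshift := Nat.xor_two_pow_sub_xor_two_pow ((bits_apply_eq_bits_apply_iff s).mp hij)
  simp only [bits_xor_two_pow, Pi.add_apply, Pi.single_eq_of_ne (hs _), add_zero, ha]
  exact ⟨⟨Nat.xor_lt_two_pow hi hs2, Nat.xor_lt_two_pow hj hs2⟩, by omega, hdi, hdj, trivial⟩

theorem exists_lt_apply_ne {ι κ α : Type*} {L : ℕ} {jJ : κ → ι} {π : ℕ → ι}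
    (hcover : ∀ v, v ∈ π '' Set.Iio L ∨ ∃ b, jJ b = v) {y z : ι → α} (hyz : y ≠ z)
    (hJ : ∀ b, y (jJ b) = z (jJ b)) : ∃ t < L, y (π t) ≠ z (π t) := by
  obtain ⟨v, hv⟩ := Function.ne_iff.mp hyz
  rcases hcover v with ⟨t, ht, rfl⟩ | ⟨b, rfl⟩
  · exact ⟨t, ht, hv⟩
  · exact absurd (hJ b) hv

theorem firstDiff_bits_of_mem_golayPairs {m k L : ℕ} {jJ : Fin k → Fin m} {π : ℕ → Fin m}
    (hcover : ∀ v, v ∈ π '' Set.Iio L ∨ ∃ b, jJ b = v) {d : Fin k → ZMod 2} {ℓ : ℤ} (hℓ : ℓ ≠ 0)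
    {i j : ℕ} (h : (i, j) ∈ golayPairs m k jJ d (π 0) ℓ) :
    0 < firstDiff π (bits m i) (bits m j) ∧ firstDiff π (bits m i) (bits m j) < L ∧
      bits m i (π (firstDiff π (bits m i) (bits m j)))
        ≠ bits m j (π (firstDiff π (bits m i) (bits m j))) := by
  simp only [golayPairs, mem_filter, mem_product, mem_range] at h
  obtain ⟨⟨hi, hj⟩, hij, hdi, hdj, h0⟩ := h
  have hne : bits m i ≠ bits m j := fun h => hℓ (by have := eq_of_bits_eq hi hj h; omega)
  obtain ⟨t, htL, ht⟩ := exists_lt_apply_ne hcover hne fun b => (hdi b).trans (hdj b).symm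
  refine ⟨Nat.pos_of_ne_zero fun hv => apply_firstDiff_ne ht (by rwa [hv]),
    (firstDiff_le ht).trans_lt htL, apply_firstDiff_ne ht⟩

theorem sum_stdAddChar_golayPairs_eq_zero {q m k L : ℕ} (hq : Even q) [NeZero q]
    {jJ : Fin k → Fin m} {π iI : ℕ → Fin m} (hπ : Set.InjOn π (Set.Iio L))
    (hcover : ∀ v, v ∈ π '' Set.Iio L ∨ ∃ b, jJ b = v)
    (hdisj : ∀ v ∈ π '' Set.Iio L, ∀ b, jJ b ≠ v)
    {d : Fin k → ZMod 2} {f : (Fin m → ZMod 2) → ZMod q} {c : ℕ → ZMod q} {c0 : ZMod q}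
    (hf : ∀ y : Fin m → ZMod 2, (∀ b, y (jJ b) = d b) → f y = pathGBF q L π iI c c0 y)
    {ℓ : ℤ} (hℓ : ℓ ≠ 0) :
    ∑ p ∈ golayPairs m k jJ d (π 0) ℓ, ZMod.stdAddChar (f (bits m p.1) - f (bits m p.2)) = 0 := by
  have hflip : ∀ p ∈ golayPairs m k jJ d (π 0) ℓ,
      (p.1 ^^^ 2 ^ (π (firstDiff π (bits m p.1) (bits m p.2) - 1) : ℕ),
        p.2 ^^^ 2 ^ (π (firstDiff π (bits m p.1) (bits m p.2) - 1) : ℕ))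
        ∈ golayPairs m k jJ d (π 0) ℓ := by
    rintro ⟨i, j⟩ h
    obtain ⟨hpos, hlt, -⟩ := firstDiff_bits_of_mem_golayPairs hcover hℓ h
    dsimp only
    exact xor_two_pow_mem_golayPairs h (hdisj _ ⟨_, Set.mem_Iio.mpr (by omega), rfl⟩)
      (apply_eq_of_lt_firstDiff (by omega))
  refine sum_eq_zero_of_xor_two_pow_neg _ hflip ?_ ?_
  · rintro ⟨i, j⟩ -
    simp only [bits_xor_two_pow, firstDiff_add_right]
  · rintro ⟨i, j⟩ h
    obtain ⟨hpos, hlt, hne⟩ := firstDiff_bits_of_mem_golayPairs hcover hℓ h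
    have hflip := hflip _ h
    simp only [golayPairs, mem_filter, bits_xor_two_pow] at h hflip ⊢
    rw [hf _ h.2.2.1, hf _ h.2.2.2.1, hf _ hflip.2.2.1, hf _ hflip.2.2.2.1,
      pathGBF_add_single_sub hq hπ iI c c0 (by omega)
        (fun t ht => apply_eq_of_lt_firstDiff (by omega)) (by rwa [Nat.sub_add_cancel hpos]),
      AddChar.map_add_eq_mul, stdAddChar_half hq, mul_neg_one]

theorem autoCorr_add_autoCorr_eq_zero_of_pathGBF {q m k L : ℕ} (hq : Even q) [NeZero q]
    {jJ : Fin k → Fin m} {π iI : ℕ → Fin m} (hπ : Set.InjOn π (Set.Iio L))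
    (hcover : ∀ v, v ∈ π '' Set.Iio L ∨ ∃ b, jJ b = v)
    (hdisj : ∀ v ∈ π '' Set.Iio L, ∀ b, jJ b ≠ v)
    {d : Fin k → ZMod 2} {f : (Fin m → ZMod 2) → ZMod q} {c : ℕ → ZMod q} {c0 : ZMod q}
    (hf : ∀ y : Fin m → ZMod 2, (∀ b, y (jJ b) = d b) → f y = pathGBF q L π iI c c0 y)
    (c' : ZMod q) {ℓ : ℤ} (hℓ : ℓ ≠ 0) :
    autoCorr (2 ^ m) (restrictVec m k jJ d (polyVec m f)) ℓ
      + autoCorr (2 ^ m) (restrictVec m k jJ d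
          (polyVec m fun y => f y + ((q / 2 : ℕ) : ZMod q) * ((y (π 0)).val : ZMod q) + c')) ℓ
      = 0 := by
  rw [autoCorr_add_autoCorr]
  calc _ = 2 * ∑ p ∈ golayPairs m k jJ d (π 0) ℓ,
        ZMod.stdAddChar (f (bits m p.1) - f (bits m p.2)) := by
        rw [mul_sum, golayPairs, sum_filter]
        refine sum_congr rfl fun p _ => ?_
        rw [restrictVec_polyVec_mul_conj_add hq]
        split_ifs <;> tauto
    _ = 0 := by rw [sum_stdAddChar_golayPairs_eq_zero hq hπ hcover hdisj hf hℓ, mul_zero]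

theorem image_reflect_Iio {α : Type*} (u : ℕ → α) (L : ℕ) :
    (fun t => u (L - 1 - t)) '' Set.Iio L = u '' Set.Iio L := by
  ext v
  simp only [Set.mem_image, Set.mem_Iio]
  constructor
  · rintro ⟨t, ht, rfl⟩
    exact ⟨L - 1 - t, by omega, rfl⟩
  · rintro ⟨t, ht, rfl⟩
    exact ⟨L - 1 - t, by omega, by rw [show L - 1 - (L - 1 - t) = t by omega]⟩

theorem Set.InjOn.reflect_Iio {α : Type*} {u : ℕ → α} {L : ℕ} (hu : Set.InjOn u (Set.Iio L)) :
    Set.InjOn (fun t => u (L - 1 - t)) (Set.Iio L) := fun s hs t ht h => by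
  simp only [Set.mem_Iio] at hs ht
  have := hu (Set.mem_Iio.mpr (by omega : L - 1 - s < L)) (Set.mem_Iio.mpr (by omega)) h
  omega

theorem stmt_2_general (q m k : ℕ) (hq : Even q) (hq1 : 0 < q)
    (iI : ℕ → Fin m) (jJ : Fin k → Fin m)
    (hdisj : ∀ a < m - k, ∀ b : Fin k, iI a ≠ jJ b)
    (hcover : ∀ v : Fin m, (∃ a < m - k, iI a = v) ∨ ∃ b : Fin k, jJ b = v)
    (d : Fin k → ZMod 2)
    (f : (Fin m → ZMod 2) → ZMod q)
    (π : ℕ → Fin m) (hπInj : Set.InjOn π (Set.Iio (m - k)))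
    (hπrange : π '' Set.Iio (m - k) = iI '' Set.Iio (m - k))
    (c : ℕ → ZMod q) (c0 : ZMod q)
    (hf : ∀ y : Fin m → ZMod 2, (∀ b : Fin k, y (jJ b) = d b) →
      f y = ((q / 2 : ℕ) : ZMod q) *
              ((∑ α ∈ Finset.range (m - k - 1), (y (π α)).val * (y (π (α + 1))).val : ℕ) : ZMod q)
            + (∑ α ∈ Finset.range (m - k), c α * ((y (iI α)).val : ZMod q)) + c0)
    (a : Fin m) (ha : a = π 0 ∨ a = π (m - k - 1)) (c' : ZMod q)
    (ℓ : ℤ) (hℓ : ℓ ≠ 0) :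
    autoCorr (2 ^ m) (restrictVec m k jJ d (polyVec m f)) ℓ
      + autoCorr (2 ^ m) (restrictVec m k jJ d
          (polyVec m (fun y => f y + ((q / 2 : ℕ) : ZMod q) * ((y a).val : ZMod q) + c'))) ℓ
      = 0 := by
  have : NeZero q := ⟨hq1.ne'⟩
  have hf' : ∀ y : Fin m → ZMod 2, (∀ b, y (jJ b) = d b) → f y = pathGBF q (m - k) π iI c c0 y :=
    hf
  have hcover' : ∀ v, v ∈ π '' Set.Iio (m - k) ∨ ∃ b, jJ b = v := by
    rw [hπrange]
    exact hcover
  have hdisj' : ∀ v ∈ π '' Set.Iio (m - k), ∀ b, jJ b ≠ v := by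
    rw [hπrange]
    rintro _ ⟨t, ht, rfl⟩ b
    exact (hdisj t ht b).symm
  rcases ha with rfl | rfl
  · exact autoCorr_add_autoCorr_eq_zero_of_pathGBF hq hπInj hcover' hdisj' hf' c' hℓ
  · rw [← image_reflect_Iio] at hcover' hdisj'
    rw [← pathGBF_reflect] at hf'
    exact autoCorr_add_autoCorr_eq_zero_of_pathGBF hq hπInj.reflect_Iio hcover' hdisj' hf' c' hℓ

/-- Theorem 1 (Golay pairs from restricted quadratic forms): if `f|_{x=d}` is
`(q/2)·∑_α x_{π(α)}x_{π(α+1)} + ∑_α c_α x_{i_α} + c` for a bijection `π` of `{0,…,m-k-1}`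
onto `I`, and `a = π(0)` or `a = π(m-k-1)`, then `F|_{x=d}` and `F'|_{x=d}` form a Golay
complementary pair, where `F, F'` are the polyphase vectors of `f` and `f + (q/2)x_a + c'`. -/
theorem stmt_2 (q m k : ℕ) (hq : Even q) (hq1 : 0 < q) (hkm : k ≤ m)
    (iI : ℕ → Fin m) (jJ : Fin k → Fin m)
    (hiInj : Set.InjOn iI (Set.Iio (m - k))) (hjInj : Function.Injective jJ)
    (hdisj : ∀ a < m - k, ∀ b : Fin k, iI a ≠ jJ b)
    (hcover : ∀ v : Fin m, (∃ a < m - k, iI a = v) ∨ ∃ b : Fin k, jJ b = v)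
    (d : Fin k → ZMod 2)
    (f : (Fin m → ZMod 2) → ZMod q)
    (π : ℕ → Fin m) (hπInj : Set.InjOn π (Set.Iio (m - k)))
    (hπrange : π '' Set.Iio (m - k) = iI '' Set.Iio (m - k))
    (c : ℕ → ZMod q) (c0 : ZMod q)
    (hf : ∀ y : Fin m → ZMod 2, (∀ b : Fin k, y (jJ b) = d b) →
      f y = ((q / 2 : ℕ) : ZMod q) *
              ((∑ α ∈ Finset.range (m - k - 1), (y (π α)).val * (y (π (α + 1))).val : ℕ) : ZMod q)
            + (∑ α ∈ Finset.range (m - k), c α * ((y (iI α)).val : ZMod q)) + c0)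
    (a : Fin m) (ha : a = π 0 ∨ a = π (m - k - 1)) (c' : ZMod q)
    (ℓ : ℤ) (hℓ : ℓ ≠ 0) :
    autoCorr (2 ^ m) (restrictVec m k jJ d (polyVec m f)) ℓ
      + autoCorr (2 ^ m) (restrictVec m k jJ d
          (polyVec m (fun y => f y + ((q / 2 : ℕ) : ZMod q) * ((y a).val : ZMod q) + c'))) ℓ
      = 0 :=
  stmt_2_general q m k hq hq1 iI jJ hdisj hcover d f π hπInj hπrange c c0 hf a ha c' ℓ hℓ
end

section
/- Let q = 2^h with h ≥ 1, let I = {i_0,...,i_{m-k-1}} and J = {j_0,...,j_{k-1}} partition {0,1,...,m-1}, and write x = (x_{j_0},...,x_{j_{k-1}}). Let a : Z_2^m → Z_{2^h} be of the form a = Σ_{α=0}^{m-k-1} x_{i_α}·g_α(x_{j_0},...,x_{j_{k-1}}) + g'(x_{j_0},...,x_{j_{k-1}}), where g_0,...,g_{m-k-1}, g' : Z_2^k → Z_{2^h} are arbitrary, and let b = 2^{h-1}·Σ_{d=0}^{2^k-1} Σ_{α=0}^{m-k-2} x_{π_d(α)} x_{π_d(α+1)} · Π_{β=0}^{k-1}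 x_{j_β}^{d_β}(1 - x_{j_β})^{1-d_β}, where π_0,...,π_{2^k-1} are bijections from {0,...,m-k-1} onto I and (d_0,...,d_{k-1}) is the binary expansion of d. Then the polyphase vector associated with a + b has PMEPR at most 2^{k+1}: sup_{0 ≤ t < T} |Σ_{i=0}^{2^m-1} ξ^{(a+b)_i} e^{2π√(-1)(f_c + i/T)t}|² ≤ 2^{k+1}·2^m, where ξ = e^{2π√(-1)/2^h}. -/
open Finset

/-- The function `a = ∑_α x_{i_α}·g_α(x_{j_0},…,x_{j_{k-1}}) + g'(x_{j_0},…,x_{j_{k-1}})`. -/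
def aFun (h m k : ℕ) (iI : ℕ → Fin m) (jJ : Fin k → Fin m)
    (g : ℕ → (Fin k → ZMod 2) → ZMod (2 ^ h)) (g' : (Fin k → ZMod 2) → ZMod (2 ^ h))
    (y : Fin m → ZMod 2) : ZMod (2 ^ h) :=
  (∑ α ∈ Finset.range (m - k), ((y (iI α)).val : ZMod (2 ^ h)) * g α (fun b => y (jJ b)))
    + g' (fun b => y (jJ b))

/-- The function
`b = 2^{h-1}·∑_{d∈ℤ₂^k} ∑_{α} x_{π_d(α)}x_{π_d(α+1)} ∏_β x_{j_β}^{d_β}(1-x_{j_β})^{1-d_β}`,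
computed in `ℕ` and cast into `ℤ_{2^h}`. -/
def bFun (h m k : ℕ) (jJ : Fin k → Fin m) (π : (Fin k → ZMod 2) → ℕ → Fin m)
    (y : Fin m → ZMod 2) : ZMod (2 ^ h) :=
  ((2 ^ (h - 1) * ∑ d : Fin k → ZMod 2,
      (∑ α ∈ Finset.range (m - k - 1), (y (π d α)).val * (y (π d (α + 1))).val)
        * ∏ b : Fin k, (y (jJ b)).val ^ (d b).val * (1 - (y (jJ b)).val) ^ (1 - (d b).val)
    : ℕ) : ZMod (2 ^ h))

/-!
Fix the values `d` of the variables `x_J` and list the remaining variables in the order `π_d`,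
`u_α = x_{π_d(α)}`. Then `b` collapses to `2^{h-1}·∑ u_α u_{α+1}`, so `ξ^b = (-1)^{∑ u_α u_{α+1}}`,
while `ξ^a` and the carrier `e^{2π√-1 (f_c + i/T) t} = K·z^i` (`|K| = |z| = 1`, `i` the binary
number `x`) contribute a unimodular factor depending on `d` only and unimodular weights `w_α^{u_α}`.
The envelope is thus a sum over the `2^k` values of `d` of unimodular multiples of weighted Golay
sums `S(w) = ∑_u (-1)^{∑ u_α u_{α+1}} ∏ w_α^{u_α}`. Peeling off `u_0` and applying the
parallelogram law gives Golay's identity `|S(w)|² + |S(w')|² = 2^{n+1}`, `w'` being `w` with `w_0`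
negated and `n = m - k`, so `|S(w)|² ≤ 2^{n+1}`; Cauchy–Schwarz over `d` then bounds the squared
envelope by `2^k·2^k·2^{n+1} = 2^{k+1}·2^m`.
-/

namespace GolayPMEPR

def zeroExtend {n : ℕ} (u : Fin n → ZMod 2) (j : ℕ) : ZMod 2 :=
  if hj : j < n then u ⟨j, hj⟩ else 0

def pathForm {n : ℕ} (u : Fin n → ZMod 2) : ℕ :=
  ∑ j ∈ range (n - 1), (zeroExtend u j).val * (zeroExtend u (j + 1)).val

def negHead (w : ℕ → ℂ) : ℕ → ℂ := Function.update w 0 (-w 0)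

noncomputable def golaySum (n : ℕ) (w : ℕ → ℂ) : ℂ :=
  ∑ u : Fin n → ZMod 2, (-1) ^ pathForm u * ∏ j : Fin n, w j ^ (u j).val

@[simp] lemma zeroExtend_cons_zero {n : ℕ} (v : ZMod 2) (u : Fin n → ZMod 2) :
    zeroExtend (Fin.cons v u : Fin (n + 1) → ZMod 2) 0 = v := rfl

@[simp] lemma zeroExtend_cons_succ {n : ℕ} (v : ZMod 2) (u : Fin n → ZMod 2) (j : ℕ) :
    zeroExtend (Fin.cons v u : Fin (n + 1) → ZMod 2) (j + 1) = zeroExtend u j := by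
  by_cases hj : j < n
  · simp [zeroExtend, hj, ← Fin.succ_mk]
  · simp [zeroExtend, hj]

lemma pathForm_cons {n : ℕ} (v : ZMod 2) (u : Fin n → ZMod 2) :
    pathForm (Fin.cons v u : Fin (n + 1) → ZMod 2) = v.val * (zeroExtend u 0).val + pathForm u := by
  cases n with
  | zero => simp [pathForm, zeroExtend]
  | succ n =>
    rw [pathForm, Nat.add_sub_cancel, sum_range_succ', add_comm]
    simp [pathForm]

@[simp] lemma negHead_zero (w : ℕ → ℂ) : negHead w 0 = -w 0 := Function.update_self ..

@[simp] lemma negHead_succ (w : ℕ → ℂ) (j : ℕ) : negHead w (j + 1) = w (j + 1) :=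
  Function.update_of_ne j.succ_ne_zero ..

lemma neg_one_pow_mul_prod_eq_prod_negHead {n : ℕ} (w : ℕ → ℂ) (u : Fin n → ZMod 2) :
    (-1) ^ (zeroExtend u 0).val * ∏ j : Fin n, w j ^ (u j).val
      = ∏ j : Fin n, negHead w j ^ (u j).val := by
  cases n with
  | zero => simp [zeroExtend]
  | succ n =>
    simp only [Fin.prod_univ_succ, Fin.val_zero, Fin.val_succ, negHead_zero, negHead_succ,
      neg_pow (w 0)]
    simp only [zeroExtend, Nat.pos_of_neZero, ↓reduceDIte, Fin.zero_eta]
    ring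

lemma sum_fun_fin_succ_zmod_two {M : Type*} [AddCommMonoid M] {n : ℕ}
    (f : (Fin (n + 1) → ZMod 2) → M) :
    ∑ u, f u = ∑ u : Fin n → ZMod 2, (f (Fin.cons 0 u) + f (Fin.cons 1 u)) := by
  rw [← (Fin.consEquiv fun _ => ZMod 2).sum_comp, Fintype.sum_prod_type, Finset.sum_comm]
  exact sum_congr rfl fun u _ => Fin.sum_univ_two _

lemma golaySum_zero (w : ℕ → ℂ) : golaySum 0 w = 1 := by
  simp [golaySum, pathForm]

lemma golaySum_succ (n : ℕ) (w : ℕ → ℂ) :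
    golaySum (n + 1) w
      = golaySum n (fun j => w (j + 1)) + w 0 * golaySum n (negHead fun j => w (j + 1)) := by
  unfold golaySum
  rw [sum_fun_fin_succ_zmod_two, sum_add_distrib, mul_sum]
  congr 1 <;> refine sum_congr rfl fun u _ => ?_
  · simp [pathForm_cons, Fin.prod_univ_succ]
  · rw [← neg_one_pow_mul_prod_eq_prod_negHead]
    simp only [pathForm_cons, Fin.prod_univ_succ, Fin.cons_zero, Fin.cons_succ, Fin.val_succ,
      Fin.val_zero, ZMod.val_one, one_mul, pow_one, pow_add]
    ring

lemma sq_norm_golaySum_add_sq_norm_golaySum_negHead (n : ℕ) {w : ℕ → ℂ}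
    (hw : ∀ j, ‖w j‖ = 1) :
    ‖golaySum n w‖ ^ 2 + ‖golaySum n (negHead w)‖ ^ 2 = 2 ^ (n + 1) := by
  induction n generalizing w with
  | zero => norm_num [golaySum_zero]
  | succ n ih =>
    have htail : (fun j => negHead w (j + 1)) = fun j => w (j + 1) := funext (negHead_succ w)
    rw [golaySum_succ, golaySum_succ, htail, negHead_zero, neg_mul, ← sub_eq_add_neg,
      parallelogram_law_with_norm ℝ, norm_mul, hw, one_mul,
      ih fun j => hw (j + 1), pow_succ 2 (n + 1)]
    ring

lemma sq_norm_golaySum_le (n : ℕ) {w : ℕ → ℂ} (hw : ∀ j, ‖w j‖ = 1) :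
    ‖golaySum n w‖ ^ 2 ≤ 2 ^ (n + 1) := by
  rw [← sq_norm_golaySum_add_sq_norm_golaySum_negHead n hw]
  exact le_add_of_nonneg_right (sq_nonneg _)

def encode {m : ℕ} (y : Fin m → ZMod 2) : ℕ := ∑ v, (y v).val * 2 ^ (v : ℕ)

lemma bits_eq_finFunctionFinEquiv_symm {m i : ℕ} (hi : i < 2 ^ m) :
    bits m i = finFunctionFinEquiv.symm ⟨i, hi⟩ := by
  funext j
  apply Fin.ext
  have hlt : i / 2 ^ (j : ℕ) % 2 < 2 := Nat.mod_lt _ two_pos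
  simp only [bits, Nat.testBit_eq_decide_div_mod_eq, finFunctionFinEquiv,
    Equiv.ofRightInverseOfCardLE_symm_apply]
  interval_cases i / 2 ^ (j : ℕ) % 2 <;> rfl

lemma sum_range_two_pow_eq_sum_encode {M : Type*} [AddCommMonoid M] (m : ℕ)
    (f : (Fin m → ZMod 2) → ℕ → M) :
    ∑ i ∈ range (2 ^ m), f (bits m i) i = ∑ y, f y (encode y) := by
  rw [← Fin.sum_univ_eq_sum_range (fun i => f (bits m i) i), ← finFunctionFinEquiv.sum_comp]
  refine sum_congr rfl fun y _ => ?_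
  rw [bits_eq_finFunctionFinEquiv_symm (finFunctionFinEquiv y).isLt, Fin.eta,
    Equiv.symm_apply_apply]
  rfl

section Splitting

variable {k m n : ℕ} {jJ : Fin k → Fin m}

lemma sum_eq_sum_add_sum_of_bijective_sumElim {M : Type*} [AddCommMonoid M] {s : Fin n → Fin m}
    (hs : Function.Bijective (Sum.elim jJ s)) (f : Fin m → M) :
    ∑ v, f v = ∑ b, f (jJ b) + ∑ α, f (s α) := by
  rw [← Fintype.sum_bijective _ hs (f ∘ Sum.elim jJ s) f fun _ => rfl, Fintype.sum_sum_type]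
  rfl

lemma bijective_comp_prod_comp {σ : (Fin k → ZMod 2) → Fin n → Fin m}
    (hσ : ∀ d, Function.Bijective (Sum.elim jJ (σ d))) :
    Function.Bijective fun y : Fin m → ZMod 2 => (y ∘ jJ, y ∘ σ (y ∘ jJ)) := by
  rw [Fintype.bijective_iff_injective_and_card]
  constructor
  · intro y y' hyy'
    obtain ⟨hJ, hσy⟩ := Prod.mk.inj hyy'
    rw [hJ] at hσy
    apply (hσ (y' ∘ jJ)).surjective.injective_comp_right
    simp only [Sum.comp_elim, hJ, hσy]
  · have hcard := Fintype.card_of_bijective (hσ 0)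
    simp only [Fintype.card_sum, Fintype.card_fin] at hcard
    simp [← hcard, pow_add]

lemma sum_eq_sum_mul_golaySum {σ : (Fin k → ZMod 2) → Fin n → Fin m}
    (hσ : ∀ d, Function.Bijective (Sum.elim jJ (σ d)))
    (A : (Fin k → ZMod 2) → ℂ) (w : (Fin k → ZMod 2) → ℕ → ℂ) :
    ∑ y : Fin m → ZMod 2, A (y ∘ jJ) * ((-1) ^ pathForm (fun α => y (σ (y ∘ jJ) α))
        * ∏ α : Fin n, w (y ∘ jJ) α ^ (y (σ (y ∘ jJ) α)).val)
      = ∑ d, A d * golaySum n (w d) := by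
  refine (Fintype.sum_bijective _ (bijective_comp_prod_comp hσ) _
    (fun p => A p.1 * ((-1) ^ pathForm p.2 * ∏ α : Fin n, w p.1 α ^ (p.2 α).val))
    fun _ => rfl).trans ?_
  simp_rw [Fintype.sum_prod_type, golaySum, mul_sum]

end Splitting

lemma sq_norm_sum_mul_golaySum_le {ι : Type*} [Fintype ι] (n : ℕ) {A : ι → ℂ}
    (hA : ∀ d, ‖A d‖ = 1) {w : ι → ℕ → ℂ} (hw : ∀ d j, ‖w d j‖ = 1) :
    ‖∑ d, A d * golaySum n (w d)‖ ^ 2 ≤ Fintype.card ι ^ 2 * 2 ^ (n + 1) := by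
  calc ‖∑ d, A d * golaySum n (w d)‖ ^ 2
      ≤ (∑ d, ‖golaySum n (w d)‖) ^ 2 := by
        gcongr
        refine norm_sum_le_of_le _ fun d _ => ?_
        rw [norm_mul, hA, one_mul]
    _ ≤ Fintype.card ι * ∑ d, ‖golaySum n (w d)‖ ^ 2 := sq_sum_le_card_mul_sum_sq
    _ ≤ Fintype.card ι * ∑ _d : ι, (2 : ℝ) ^ (n + 1) := by
        gcongr with d
        exact sq_norm_golaySum_le n (hw d)
    _ = Fintype.card ι ^ 2 * 2 ^ (n + 1) := by
        rw [sum_const, card_univ, nsmul_eq_mul]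
        ring

lemma polyVec_eq_stdAddChar {q : ℕ} [NeZero q] (m : ℕ) (f : (Fin m → ZMod 2) → ZMod q)
    (i : ℕ) :
    polyVec m f i = ZMod.stdAddChar (f (bits m i)) := by
  rw [ZMod.stdAddChar_apply, ZMod.toCircle_apply]
  rfl

lemma stdAddChar_two_pow_pred {h : ℕ} (hh : 1 ≤ h) :
    ZMod.stdAddChar ((2 ^ (h - 1) : ℕ) : ZMod (2 ^ h)) = -1 := by
  have h2 : ((2 ^ h : ℕ) : ℂ) = 2 * 2 ^ (h - 1) := by
    rw [← pow_succ', Nat.sub_add_cancel hh]; push_cast; rfl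
  rw [← Int.cast_natCast, ZMod.stdAddChar_coe, h2, ← Complex.exp_pi_mul_I]
  congr 1
  push_cast
  field_simp

lemma _root_.AddChar.map_sum_eq_prod {ι A M : Type*} [AddCommMonoid A] [CommMonoid M]
    (ψ : AddChar A M) (s : Finset ι) (f : ι → A) : ψ (∑ i ∈ s, f i) = ∏ i ∈ s, ψ (f i) := by
  classical
  induction s using Finset.induction_on with
  | empty => simp
  | insert a s ha ih => rw [sum_insert ha, prod_insert ha, AddChar.map_add_eq_mul, ih]

lemma pathForm_eq_sum {n : ℕ} (x : ℕ → ZMod 2) :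
    pathForm (fun α : Fin n => x α) = ∑ j ∈ range (n - 1), (x j).val * (x (j + 1)).val := by
  refine sum_congr rfl fun j hj => ?_
  have : j + 1 < n := by rw [mem_range] at hj; omega
  simp [zeroExtend, this, (Nat.lt_succ_self j).trans this]

lemma val_pow_val_mul_one_sub_val_pow (x e : ZMod 2) :
    x.val ^ e.val * (1 - x.val) ^ (1 - e.val) = if x = e then 1 else 0 := by
  fin_cases x <;> fin_cases e <;> rfl

lemma sum_range_comp_eq_of_image_eq {β M : Type*} [DecidableEq β] [AddCommMonoid M] {n : ℕ}
    {f g : ℕ → β} (hf : Set.InjOn f (Set.Iio n)) (hg : Set.InjOn g (Set.Iio n))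
    (hfg : f '' Set.Iio n = g '' Set.Iio n) (φ : β → M) :
    ∑ α ∈ range n, φ (f α) = ∑ α ∈ range n, φ (g α) := by
  rw [← sum_image (g := f) (by simpa using hf), ← sum_image (g := g) (by simpa using hg)]
  congr 1
  exact coe_injective (by simpa using hfg)

section Partition

variable {h m k : ℕ} {iI : ℕ → Fin m} {jJ : Fin k → Fin m}
  {π : (Fin k → ZMod 2) → ℕ → Fin m}

lemma bFun_eq (y : Fin m → ZMod 2) :
    bFun h m k jJ π y
      = ((2 ^ (h - 1) * pathForm (fun α : Fin (m - k) => y (π (y ∘ jJ) α)) : ℕ)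
          : ZMod (2 ^ h)) := by
  have hind : ∀ d : Fin k → ZMod 2,
      ∏ b, (y (jJ b)).val ^ (d b).val * (1 - (y (jJ b)).val) ^ (1 - (d b).val)
        = if y ∘ jJ = d then 1 else 0 := by
    intro d
    simp [val_pow_val_mul_one_sub_val_pow, Fintype.prod_boole, funext_iff]
  simp only [bFun, hind, mul_ite, mul_one, mul_zero, sum_ite_eq, mem_univ, if_true]
  rw [pathForm_eq_sum fun j => y (π (y ∘ jJ) j)]

lemma aFun_eq (hiInj : Set.InjOn iI (Set.Iio (m - k)))
    (hπInj : ∀ d, Set.InjOn (π d) (Set.Iio (m - k)))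
    (hπrange : ∀ d, (π d) '' Set.Iio (m - k) = iI '' Set.Iio (m - k))
    (g : ℕ → (Fin k → ZMod 2) → ZMod (2 ^ h)) (g' : (Fin k → ZMod 2) → ZMod (2 ^ h))
    (y : Fin m → ZMod 2) :
    aFun h m k iI jJ g g' y
      = ∑ α : Fin (m - k), (y (π (y ∘ jJ) α)).val
          • g (Function.invFunOn iI (Set.Iio (m - k)) (π (y ∘ jJ) α)) (y ∘ jJ) + g' (y ∘ jJ) := by
  classical
  set d := y ∘ jJ
  set τ := Function.invFunOn iI (Set.Iio (m - k))
  have hτ : ∀ α ∈ range (m - k), g α d = g (τ (iI α)) d := fun α hα =>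
    congrArg (g · d) (hiInj.leftInvOn_invFunOn (by simpa using hα)).symm
  calc aFun h m k iI jJ g g' y
      = ∑ α ∈ range (m - k), (y (iI α)).val • g (τ (iI α)) d + g' d := by
        simp only [aFun, nsmul_eq_mul]
        exact congrArg (· + g' d) (sum_congr rfl fun α hα => congrArg _ (hτ α hα))
    _ = ∑ α ∈ range (m - k), (y (π d α)).val • g (τ (π d α)) d + g' d := by
        rw [sum_range_comp_eq_of_image_eq hiInj (hπInj d) (hπrange d).symm
          fun v => (y v).val • g (τ v) d]
    _ = _ := by rw [Fin.sum_univ_eq_sum_range fun α => (y (π d α)).val • g (τ (π d α)) d]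

noncomputable def offset (jJ : Fin k → Fin m) (g' : (Fin k → ZMod 2) → ZMod (2 ^ h)) (z : ℂ)
    (d : Fin k → ZMod 2) : ℂ :=
  ZMod.stdAddChar (g' d) * z ^ ∑ b, (d b).val * 2 ^ (jJ b : ℕ)

/-- `invFunOn iI` recovers the index `α` of the variable `x_{π_d(j)} = x_{i_α}`, whose coefficient
in `a` is `g_α`. -/
noncomputable def weight (iI : ℕ → Fin m) (π : (Fin k → ZMod 2) → ℕ → Fin m)
    (g : ℕ → (Fin k → ZMod 2) → ZMod (2 ^ h)) (z : ℂ) (d : Fin k → ZMod 2) (j : ℕ) : ℂ :=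
  ZMod.stdAddChar (g (Function.invFunOn iI (Set.Iio (m - k)) (π d j)) d) * z ^ 2 ^ (π d j : ℕ)

lemma stdAddChar_mul_pow_encode (hh : 1 ≤ h) (hiInj : Set.InjOn iI (Set.Iio (m - k)))
    (hπInj : ∀ d, Set.InjOn (π d) (Set.Iio (m - k)))
    (hπrange : ∀ d, (π d) '' Set.Iio (m - k) = iI '' Set.Iio (m - k))
    (hpart : ∀ d, Function.Bijective (Sum.elim jJ fun α : Fin (m - k) => π d α))
    (g : ℕ → (Fin k → ZMod 2) → ZMod (2 ^ h)) (g' : (Fin k → ZMod 2) → ZMod (2 ^ h))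
    (z : ℂ) (y : Fin m → ZMod 2) :
    ZMod.stdAddChar (aFun h m k iI jJ g g' y + bFun h m k jJ π y) * z ^ encode y
      = offset jJ g' z (y ∘ jJ) * ((-1) ^ pathForm (fun α : Fin (m - k) => y (π (y ∘ jJ) α))
          * ∏ α : Fin (m - k), weight iI π g z (y ∘ jJ) α ^ (y (π (y ∘ jJ) α)).val) := by
  have hencode : z ^ encode y = z ^ (∑ b, (y (jJ b)).val * 2 ^ (jJ b : ℕ))
      * ∏ α : Fin (m - k), (z ^ 2 ^ (π (y ∘ jJ) α : ℕ)) ^ (y (π (y ∘ jJ) α)).val := by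
    rw [encode, sum_eq_sum_add_sum_of_bijective_sumElim (hpart (y ∘ jJ)), pow_add]
    congr 1
    rw [← prod_pow_eq_pow_sum]
    exact prod_congr rfl fun α _ => by rw [← pow_mul, mul_comm]
  have hsign : ZMod.stdAddChar (bFun h m k jJ π y)
      = (-1) ^ pathForm (fun α : Fin (m - k) => y (π (y ∘ jJ) α)) := by
    rw [bFun_eq, Nat.cast_mul, mul_comm, ← nsmul_eq_mul, AddChar.map_nsmul_eq_pow,
      stdAddChar_two_pow_pred hh]
  rw [AddChar.map_add_eq_mul, aFun_eq hiInj hπInj hπrange, AddChar.map_add_eq_mul,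
    AddChar.map_sum_eq_prod, hsign, hencode]
  simp_rw [offset, weight, Function.comp_apply, AddChar.map_nsmul_eq_pow, mul_pow,
    prod_mul_distrib]
  ring

end Partition

lemma norm_exp_two_pi_I_mul (x : ℝ) : ‖Complex.exp (2 * Real.pi * Complex.I * x)‖ = 1 := by
  rw [← Complex.norm_exp_ofReal_mul_I (2 * Real.pi * x)]
  push_cast
  ring_nf

lemma norm_sum_mul_exp_eq (N : ℕ) (a : ℕ → ℂ) (fc T t : ℝ) :
    ‖∑ i ∈ range N,
        a i * Complex.exp (2 * Real.pi * Complex.I * ((fc : ℂ) + (i : ℂ) / (T : ℂ)) * (t : ℂ))‖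
      = ‖∑ i ∈ range N, a i * Complex.exp (2 * Real.pi * Complex.I * (t / T : ℝ)) ^ i‖ := by
  have hsplit : ∀ i : ℕ,
      Complex.exp (2 * Real.pi * Complex.I * ((fc : ℂ) + (i : ℂ) / (T : ℂ)) * (t : ℂ))
        = Complex.exp (2 * Real.pi * Complex.I * (fc * t : ℝ))
          * Complex.exp (2 * Real.pi * Complex.I * (t / T : ℝ)) ^ i := fun i => by
    rw [← Complex.exp_nat_mul, ← Complex.exp_add]
    push_cast
    ring_nf
  simp_rw [hsplit, mul_left_comm _ (Complex.exp _), ← mul_sum, norm_mul, norm_exp_two_pi_I_mul,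
    one_mul]

lemma norm_stdAddChar_mul_pow {q : ℕ} [NeZero q] (x : ZMod q) {z : ℂ} (hz : ‖z‖ = 1) (n : ℕ) :
    ‖ZMod.stdAddChar x * z ^ n‖ = 1 := by
  rw [norm_mul, norm_pow, hz, one_pow, mul_one, ZMod.stdAddChar_apply, Circle.norm_coe]

lemma bijective_sumElim_of_partition {m k : ℕ} {iI p : ℕ → Fin m} {jJ : Fin k → Fin m}
    (hjInj : Function.Injective jJ) (hdisj : ∀ a < m - k, ∀ b : Fin k, iI a ≠ jJ b)
    (hcover : ∀ v : Fin m, (∃ a < m - k, iI a = v) ∨ ∃ b : Fin k, jJ b = v)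
    (hpInj : Set.InjOn p (Set.Iio (m - k)))
    (hprange : p '' Set.Iio (m - k) = iI '' Set.Iio (m - k)) :
    Function.Bijective (Sum.elim jJ fun α : Fin (m - k) => p α) := by
  constructor
  · refine hjInj.sumElim (fun α β hαβ => Fin.ext (hpInj α.isLt β.isLt hαβ)) fun b α hb => ?_
    obtain ⟨a, ha, hpa⟩ : p α ∈ iI '' Set.Iio (m - k) := hprange ▸ ⟨α, α.isLt, rfl⟩
    exact hdisj a ha b (hpa.trans hb.symm)
  · intro v
    rcases hcover v with ⟨a, ha, rfl⟩ | ⟨b, rfl⟩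
    · obtain ⟨α, hα, hpα⟩ : iI a ∈ p '' Set.Iio (m - k) := hprange ▸ ⟨a, ha, rfl⟩
      exact ⟨Sum.inr ⟨α, hα⟩, hpα⟩
    · exact ⟨Sum.inl b, rfl⟩

end GolayPMEPR

open GolayPMEPR in
theorem stmt_10_general (h m k : ℕ) (hh : 1 ≤ h)
    (iI : ℕ → Fin m) (jJ : Fin k → Fin m)
    (hiInj : Set.InjOn iI (Set.Iio (m - k))) (hjInj : Function.Injective jJ)
    (hdisj : ∀ a < m - k, ∀ b : Fin k, iI a ≠ jJ b)
    (hcover : ∀ v : Fin m, (∃ a < m - k, iI a = v) ∨ ∃ b : Fin k, jJ b = v)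
    (g : ℕ → (Fin k → ZMod 2) → ZMod (2 ^ h)) (g' : (Fin k → ZMod 2) → ZMod (2 ^ h))
    (π : (Fin k → ZMod 2) → ℕ → Fin m)
    (hπInj : ∀ d, Set.InjOn (π d) (Set.Iio (m - k)))
    (hπrange : ∀ d, (π d) '' Set.Iio (m - k) = iI '' Set.Iio (m - k))
    (fc T t : ℝ) :
    ‖∑ i ∈ Finset.range (2 ^ m),
        polyVec m (fun y => aFun h m k iI jJ g g' y + bFun h m k jJ π y) i *
          Complex.exp (2 * Real.pi * Complex.I * ((fc : ℂ) + (i : ℂ) / (T : ℂ)) * (t : ℂ))‖ ^ 2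
      ≤ (2 : ℝ) ^ (k + 1) * (2 : ℝ) ^ m := by
  set z := Complex.exp (2 * Real.pi * Complex.I * (t / T : ℝ))
  have hz : ‖z‖ = 1 := norm_exp_two_pi_I_mul _
  have hpart := fun d => bijective_sumElim_of_partition hjInj hdisj hcover (hπInj d) (hπrange d)
  have hkm : k ≤ m := by simpa using Fintype.card_le_of_injective jJ hjInj
  rw [norm_sum_mul_exp_eq]
  simp_rw [polyVec_eq_stdAddChar]
  rw [sum_range_two_pow_eq_sum_encode m fun y i =>
    ZMod.stdAddChar (aFun h m k iI jJ g g' y + bFun h m k jJ π y) * z ^ i]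
  simp_rw [stdAddChar_mul_pow_encode hh hiInj hπInj hπrange hpart]
  rw [sum_eq_sum_mul_golaySum hpart (offset jJ g' z) (weight iI π g z)]
  refine (sq_norm_sum_mul_golaySum_le _ (fun d => norm_stdAddChar_mul_pow _ hz _)
    fun d j => norm_stdAddChar_mul_pow _ hz _).trans_eq ?_
  rw [Fintype.card_fun, ZMod.card, Fintype.card_fin]
  push_cast
  rw [← pow_mul, ← pow_add, ← pow_add]
  congr 1
  omega

/-- The polyphase vector associated with `a + b` has PMEPR at most `2^{k+1}`:
its envelope power never exceeds `2^{k+1}·2^m`. -/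
theorem stmt_10 (h m k : ℕ) (hh : 1 ≤ h) (hkm : k ≤ m)
    (iI : ℕ → Fin m) (jJ : Fin k → Fin m)
    (hiInj : Set.InjOn iI (Set.Iio (m - k))) (hjInj : Function.Injective jJ)
    (hdisj : ∀ a < m - k, ∀ b : Fin k, iI a ≠ jJ b)
    (hcover : ∀ v : Fin m, (∃ a < m - k, iI a = v) ∨ ∃ b : Fin k, jJ b = v)
    (g : ℕ → (Fin k → ZMod 2) → ZMod (2 ^ h)) (g' : (Fin k → ZMod 2) → ZMod (2 ^ h))
    (π : (Fin k → ZMod 2) → ℕ → Fin m)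
    (hπInj : ∀ d, Set.InjOn (π d) (Set.Iio (m - k)))
    (hπrange : ∀ d, (π d) '' Set.Iio (m - k) = iI '' Set.Iio (m - k))
    (fc T t : ℝ) (hT : 0 < T) (ht0 : 0 ≤ t) (htT : t < T) :
    ‖∑ i ∈ Finset.range (2 ^ m),
        polyVec m (fun y => aFun h m k iI jJ g g' y + bFun h m k jJ π y) i *
          Complex.exp (2 * Real.pi * Complex.I * ((fc : ℂ) + (i : ℂ) / (T : ℂ)) * (t : ℂ))‖ ^ 2
      ≤ (2 : ℝ) ^ (k + 1) * (2 : ℝ) ^ m :=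
  stmt_10_general h m k hh iI jJ hiInj hjInj hdisj hcover g g' π hπInj hπrange fc T t
end

section
/- Let q = 2^h, let I and J partition {0,1,...,m-1} with |I| = m-k ≥ 2 and |J| = k, and let R_{2^h}(k,m) be the set of vectors over Z_{2^h} associated with the functions b = 2^{h-1}·Σ_{d=0}^{2^k-1} Σ_{α=0}^{m-k-2} x_{π_d(α)} x_{π_d(α+1)} · Π_{β=0}^{k-1} x_{j_β}^{d_β}(1 - x_{j_β})^{1-d_β}, over all choices of 2^k bijections π_0,...,π_{2^k-1} from {0,...,m-k-1} onto I. Then |R_{2^h}(k,m)| = ((m-k)!/2)^{2^k}; equivalently, two tuples of bijections (π_0,...,π_{2^k-1}) and (σ_0,...,σ_{2^k-1}) yield the same vector if and only if for each d, σ_d equals π_d or the reversal of π_d (i.e., σ_d(α) = π_d(m-k-1-α) for all α). -/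
open Finset

/-- The vector over `ℤ_{2^h}` of length `2^m` associated with `b`. -/
def bVec (h m k : ℕ) (jJ : Fin k → Fin m) (π : (Fin k → ZMod 2) → ℕ → Fin m) :
    Fin (2 ^ m) → ZMod (2 ^ h) :=
  fun i => bFun h m k jJ π (bits m i.val)

/-- `π` is a `2^k`-tuple of bijections from `{0,…,m-k-1}` onto `I`. -/
def IsPermTuple (m k : ℕ) (iI : ℕ → Fin m) (π : (Fin k → ZMod 2) → ℕ → Fin m) : Prop :=
  ∀ d, Set.InjOn (π d) (Set.Iio (m - k)) ∧ (π d) '' Set.Iio (m - k) = iI '' Set.Iio (m - k)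

namespace Stmt12Aux

open scoped Classical

/-! ### Basic evaluation lemmas -/

lemma factor_eq (x e : ZMod 2) :
    x.val ^ e.val * (1 - x.val) ^ (1 - e.val) = if x = e then (1 : ℕ) else 0 := by
  revert x e; decide

lemma bits_surj (m : ℕ) (y : Fin m → ZMod 2) : ∃ i : Fin (2 ^ m), bits m i.val = y := by
  refine ⟨finFunctionFinEquiv (fun j => (⟨(y j).val, ZMod.val_lt _⟩ : Fin 2)), ?_⟩
  funext j
  have hsymm := congrFun (finFunctionFinEquiv.symm_apply_apply
    (fun j => (⟨(y j).val, ZMod.val_lt _⟩ : Fin 2))) j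
  have hval : ((finFunctionFinEquiv (fun j => (⟨(y j).val, ZMod.val_lt _⟩ : Fin 2)) : ℕ)
      / 2 ^ (j : ℕ) % 2) = (y j).val := congrArg Fin.val hsymm
  unfold bits
  rw [Nat.testBit_eq_decide_div_mod_eq, hval]
  have h01 : (y j).val = 0 ∨ (y j).val = 1 := by
    have := ZMod.val_lt (y j); omega
  have hyv : (((y j).val : ℕ) : ZMod 2) = y j := ZMod.natCast_rightInverse (y j)
  rcases h01 with hv | hv
  · have hy0 : y j = 0 := (ZMod.val_eq_zero (y j)).mp hv
    simp [hv, hy0]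
  · have hy1 : y j = 1 := by rw [← hyv, hv]; norm_num
    simp only [hv, hy1]
    rfl

lemma bFun_eval (h m k : ℕ) (jJ : Fin k → Fin m) (π : (Fin k → ZMod 2) → ℕ → Fin m)
    (y : Fin m → ZMod 2) :
    bFun h m k jJ π y =
      ((2 ^ (h - 1) *
        ∑ α ∈ Finset.range (m - k - 1),
          (y (π (fun b => y (jJ b)) α)).val * (y (π (fun b => y (jJ b)) (α + 1))).val : ℕ) :
        ZMod (2 ^ h)) := by
  classical
  unfold bFun
  have hmain : (∑ d : Fin k → ZMod 2,
      (∑ α ∈ Finset.range (m - k - 1), (y (π d α)).val * (y (π d (α + 1))).val)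
        * ∏ b : Fin k, (y (jJ b)).val ^ (d b).val * (1 - (y (jJ b)).val) ^ (1 - (d b).val))
      = ∑ α ∈ Finset.range (m - k - 1),
          (y (π (fun b => y (jJ b)) α)).val * (y (π (fun b => y (jJ b)) (α + 1))).val := by
    have hP : ∀ d : Fin k → ZMod 2,
        (∏ b : Fin k, (y (jJ b)).val ^ (d b).val * (1 - (y (jJ b)).val) ^ (1 - (d b).val))
          = if (fun b => y (jJ b)) = d then 1 else 0 := by
      intro d
      rw [Finset.prod_congr rfl (fun b _ => factor_eq (y (jJ b)) (d b)), Finset.prod_boole]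
      by_cases hcond : (fun b => y (jJ b)) = d
      · rw [if_pos hcond, if_pos (fun i _ => congrFun hcond i)]
      · rw [if_neg hcond, if_neg (fun hall => hcond (funext fun i => hall i (Finset.mem_univ i)))]
    calc (∑ d : Fin k → ZMod 2,
        (∑ α ∈ Finset.range (m - k - 1), (y (π d α)).val * (y (π d (α + 1))).val)
          * ∏ b : Fin k, (y (jJ b)).val ^ (d b).val * (1 - (y (jJ b)).val) ^ (1 - (d b).val))
        = ∑ d : Fin k → ZMod 2, (if (fun b => y (jJ b)) = d then
            (∑ α ∈ Finset.range (m - k - 1), (y (π d α)).val * (y (π d (α + 1))).val) else 0) := by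
          refine Finset.sum_congr rfl fun d _ => ?_
          rw [hP d, mul_ite, mul_one, mul_zero]
      _ = _ := by rw [Finset.sum_ite_eq]; simp
  rw [hmain]

lemma two_pow_cast_eq_iff {h : ℕ} (hh : 1 ≤ h) {a b : ℕ} :
    ((2 ^ (h - 1) * a : ℕ) : ZMod (2 ^ h)) = ((2 ^ (h - 1) * b : ℕ) : ZMod (2 ^ h))
      ↔ a % 2 = b % 2 := by
  rw [ZMod.natCast_eq_natCast_iff]
  have hmod : (a % 2 = b % 2) ↔ a ≡ b [MOD 2] := Iff.rfl
  rw [hmod, Nat.modEq_iff_dvd, Nat.modEq_iff_dvd]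
  push_cast
  rw [← mul_sub, show ((2:ℤ))^h = 2^(h-1)*2 by rw [← pow_succ]; congr 1; omega]
  exact mul_dvd_mul_iff_left (a := (2:ℤ)^(h-1)) (by positivity)


/-! ### Path combinatorics -/

variable {m : ℕ}

/-- `a` and `b` are joined by an edge of the path `π 0 - π 1 - ⋯ - π (n-1)`. -/
def Edge (n : ℕ) (π : ℕ → Fin m) (a b : Fin m) : Prop :=
  ∃ α, α + 1 < n ∧ ((π α = a ∧ π (α + 1) = b) ∨ (π α = b ∧ π (α + 1) = a))

lemma edge_no_loop {n : ℕ} {π : ℕ → Fin m} (hπ : Set.InjOn π (Set.Iio n)) (a : Fin m) :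
    ¬ Edge n π a a := by
  rintro ⟨α, hα, (⟨h1, h2⟩ | ⟨h1, h2⟩)⟩ <;>
  · have : α = α + 1 := hπ (Set.mem_Iio.mpr (by omega)) (Set.mem_Iio.mpr (by omega))
      (h1.trans h2.symm)
    omega

lemma sum_indicator_eq_edge {n : ℕ} {π : ℕ → Fin m} (hπ : Set.InjOn π (Set.Iio n))
    {a b : Fin m} (hab : a ≠ b) :
    (∑ α ∈ Finset.range (n - 1),
        (((fun v => if v = a ∨ v = b then (1 : ZMod 2) else 0) (π α)).val *
          ((fun v => if v = a ∨ v = b then (1 : ZMod 2) else 0) (π (α + 1))).val))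
      = if Edge n π a b then 1 else 0 := by
  classical
  have hval : ∀ v : Fin m,
      ((fun v => if v = a ∨ v = b then (1 : ZMod 2) else 0) v).val
        = if v = a ∨ v = b then 1 else 0 := by
    intro v
    show (if v = a ∨ v = b then (1 : ZMod 2) else 0).val = _
    by_cases hv : v = a ∨ v = b
    · rw [if_pos hv, if_pos hv]; rfl
    · rw [if_neg hv, if_neg hv]; rfl
  have hterm : ∀ α ∈ Finset.range (n - 1),
      (((fun v => if v = a ∨ v = b then (1 : ZMod 2) else 0) (π α)).val *
        ((fun v => if v = a ∨ v = b then (1 : ZMod 2) else 0) (π (α + 1))).val)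
      = if (π α = a ∧ π (α + 1) = b) ∨ (π α = b ∧ π (α + 1) = a) then 1 else 0 := by
    intro α hα
    rw [hval, hval]
    have hne : π α ≠ π (α + 1) := by
      intro hc
      have hmem := Finset.mem_range.mp hα
      have : α = α + 1 := hπ (Set.mem_Iio.mpr (by omega)) (Set.mem_Iio.mpr (by omega)) hc
      omega
    by_cases hP : (π α = a ∧ π (α + 1) = b) ∨ (π α = b ∧ π (α + 1) = a)
    · rw [if_pos hP]
      rcases hP with ⟨h1, h2⟩ | ⟨h1, h2⟩ <;>
        rw [if_pos (by tauto), if_pos (by tauto), one_mul]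
    · rw [if_neg hP]
      by_cases h1 : π α = a ∨ π α = b
      · have h2 : ¬(π (α + 1) = a ∨ π (α + 1) = b) := by
          intro h2
          apply hP
          rcases h1 with h1 | h1 <;> rcases h2 with h2 | h2
          · exact absurd (h1.trans h2.symm) hne
          · exact Or.inl ⟨h1, h2⟩
          · exact Or.inr ⟨h1, h2⟩
          · exact absurd (h1.trans h2.symm) hne
        rw [if_neg h2, mul_zero]
      · rw [if_neg h1, zero_mul]
  rw [Finset.sum_congr rfl hterm, Finset.sum_boole, Nat.cast_id]
  have huniq : ∀ β ∈ Finset.filter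
      (fun α => (π α = a ∧ π (α + 1) = b) ∨ (π α = b ∧ π (α + 1) = a)) (Finset.range (n - 1)),
      ∀ γ ∈ Finset.filter
      (fun α => (π α = a ∧ π (α + 1) = b) ∨ (π α = b ∧ π (α + 1) = a)) (Finset.range (n - 1)),
      β = γ := by
    intro β hβ γ hγ
    obtain ⟨hβr, hβP⟩ := Finset.mem_filter.mp hβ
    obtain ⟨hγr, hγP⟩ := Finset.mem_filter.mp hγ
    have hβn := Finset.mem_range.mp hβr
    have hγn := Finset.mem_range.mp hγr
    have inj : ∀ x y : ℕ, x < n → y < n → π x = π y → x = y := fun x y hx hy hxy =>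
      hπ (Set.mem_Iio.mpr hx) (Set.mem_Iio.mpr hy) hxy
    rcases hβP with ⟨e1, e2⟩ | ⟨e1, e2⟩ <;> rcases hγP with ⟨f1, f2⟩ | ⟨f1, f2⟩
    · exact inj _ _ (by omega) (by omega) (e1.trans f1.symm)
    · have h1 : β = γ + 1 := inj _ _ (by omega) (by omega) (e1.trans f2.symm)
      have h2 : β + 1 = γ := inj _ _ (by omega) (by omega) (e2.trans f1.symm)
      omega
    · have h1 : β = γ + 1 := inj _ _ (by omega) (by omega) (e1.trans f2.symm)
      have h2 : β + 1 = γ := inj _ _ (by omega) (by omega) (e2.trans f1.symm)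
      omega
    · exact inj _ _ (by omega) (by omega) (e1.trans f1.symm)
  by_cases hE : Edge n π a b
  · rw [if_pos hE]
    obtain ⟨α0, hα0, hP0⟩ := hE
    have hmem : α0 ∈ Finset.filter
        (fun α => (π α = a ∧ π (α + 1) = b) ∨ (π α = b ∧ π (α + 1) = a))
        (Finset.range (n - 1)) :=
      Finset.mem_filter.mpr ⟨Finset.mem_range.mpr (by omega), hP0⟩
    rw [Finset.eq_singleton_iff_unique_mem.mpr ⟨hmem, fun x hx => huniq x hx α0 hmem⟩]
    simp
  · rw [if_neg hE]
    refine Finset.card_eq_zero.mpr (Finset.eq_empty_iff_forall_notMem.mpr ?_)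
    intro x hx
    obtain ⟨hxr, hxP⟩ := Finset.mem_filter.mp hx
    exact hE ⟨x, by have := Finset.mem_range.mp hxr; omega, hxP⟩

lemma edge_neighbor {n : ℕ} {π : ℕ → Fin m} (hπ : Set.InjOn π (Set.Iio n))
    {p : ℕ} (hp : p < n) {x : Fin m} (hx : Edge n π (π p) x) :
    (1 ≤ p ∧ x = π (p - 1)) ∨ (p + 1 < n ∧ x = π (p + 1)) := by
  obtain ⟨α, hα, (⟨h1, h2⟩ | ⟨h1, h2⟩)⟩ := hx
  · have : α = p := hπ (Set.mem_Iio.mpr (by omega)) (Set.mem_Iio.mpr hp) h1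
    exact Or.inr ⟨by omega, by rw [← h2, this]⟩
  · have hap : α + 1 = p := hπ (Set.mem_Iio.mpr (by omega)) (Set.mem_Iio.mpr hp) h2
    exact Or.inl ⟨by omega, by rw [← h1]; congr 1; omega⟩

lemma chain {n : ℕ} {π σ : ℕ → Fin m} (hπ : Set.InjOn π (Set.Iio n))
    (hσ : Set.InjOn σ (Set.Iio n))
    (hE : ∀ a b, Edge n σ a b ↔ Edge n π a b) (h0 : σ 0 = π 0) :
    ∀ α, α < n → σ α = π α := by
  intro α
  induction α using Nat.strong_induction_on with
  | _ α IH =>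
    intro hαn
    match α, hαn with
    | 0, _ => exact h0
    | (γ + 1), hαn =>
      have hγ : σ γ = π γ := IH γ (by omega) (by omega)
      have hedge : Edge n σ (σ γ) (σ (γ + 1)) := ⟨γ, hαn, Or.inl ⟨rfl, rfl⟩⟩
      have hedge' : Edge n π (π γ) (σ (γ + 1)) := by rw [← hγ]; exact (hE _ _).mp hedge
      rcases edge_neighbor hπ (by omega) hedge' with ⟨h1, hx⟩ | ⟨h1, hx⟩
      · exfalso
        have hprev : σ (γ - 1) = π (γ - 1) := IH (γ - 1) (by omega) (by omega)
        have heq : σ (γ + 1) = σ (γ - 1) := by rw [hprev, hx]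
        have := hσ (Set.mem_Iio.mpr (by omega : γ + 1 < n))
          (Set.mem_Iio.mpr (by omega : γ - 1 < n)) heq
        omega
      · exact hx

lemma edge_rev {n : ℕ} (π : ℕ → Fin m) (a b : Fin m) :
    Edge n (fun α => π (n - 1 - α)) a b ↔ Edge n π a b := by
  constructor
  · rintro ⟨α, hα, hc⟩
    refine ⟨n - 2 - α, by omega, ?_⟩
    have e1 : n - 1 - α = (n - 2 - α) + 1 := by omega
    have e2 : n - 1 - (α + 1) = n - 2 - α := by omega
    simp only [] at hc
    rcases hc with ⟨h1, h2⟩ | ⟨h1, h2⟩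
    · exact Or.inr ⟨by rw [← h2, e2], by rw [← h1, e1]⟩
    · exact Or.inl ⟨by rw [← h2, e2], by rw [← h1, e1]⟩
  · rintro ⟨α, hα, hc⟩
    refine ⟨n - 2 - α, by omega, ?_⟩
    have e1 : n - 1 - (n - 2 - α) = α + 1 := by omega
    have e2 : n - 1 - ((n - 2 - α) + 1) = α := by omega
    simp only []
    rw [e1, e2]
    rcases hc with ⟨h1, h2⟩ | ⟨h1, h2⟩
    · exact Or.inr ⟨h2, h1⟩
    · exact Or.inl ⟨h2, h1⟩

lemma path_rigid {n : ℕ} (hn : 2 ≤ n) {π σ : ℕ → Fin m}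
    (hπ : Set.InjOn π (Set.Iio n)) (hσ : Set.InjOn σ (Set.Iio n))
    (himg : σ '' Set.Iio n = π '' Set.Iio n)
    (hE : ∀ a b, Edge n σ a b ↔ Edge n π a b) :
    (∀ α < n, σ α = π α) ∨ (∀ α < n, σ α = π (n - 1 - α)) := by
  have h0mem : σ 0 ∈ π '' Set.Iio n := by
    rw [← himg]; exact Set.mem_image_of_mem σ (Set.mem_Iio.mpr (by omega))
  obtain ⟨p, hp, hpσ⟩ := h0mem
  rw [Set.mem_Iio] at hp
  by_cases hp0 : p = 0
  · left
    exact fun α hα => chain hπ hσ hE (by rw [← hpσ, hp0]) α hα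
  by_cases hpn : p = n - 1
  · right
    have hπ'inj : Set.InjOn (fun α => π (n - 1 - α)) (Set.Iio n) := by
      intro x hx y hy hxy
      rw [Set.mem_Iio] at hx hy
      have := hπ (Set.mem_Iio.mpr (by omega : n - 1 - x < n))
        (Set.mem_Iio.mpr (by omega : n - 1 - y < n)) hxy
      omega
    have hE' : ∀ a b, Edge n σ a b ↔ Edge n (fun α => π (n - 1 - α)) a b :=
      fun a b => (hE a b).trans (edge_rev π a b).symm
    have h0' : σ 0 = π (n - 1 - 0) := by rw [Nat.sub_zero, ← hpn, ← hpσ]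
    exact fun α hα => chain hπ'inj hσ hE' h0' α hα
  · exfalso
    have hσ1 : ∀ x, Edge n σ (σ 0) x → x = σ 1 := by
      intro x hx
      rcases edge_neighbor hσ (by omega : (0:ℕ) < n) hx with ⟨h1, _⟩ | ⟨_, hx2⟩
      · omega
      · exact hx2
    have e1 : Edge n π (π p) (π (p - 1)) :=
      ⟨p - 1, by omega, Or.inr ⟨rfl, by congr 1; omega⟩⟩
    have e2 : Edge n π (π p) (π (p + 1)) := ⟨p, by omega, Or.inl ⟨rfl, rfl⟩⟩
    have c1 : π (p - 1) = σ 1 := hσ1 _ (by rw [← hpσ]; exact (hE _ _).mpr e1)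
    have c2 : π (p + 1) = σ 1 := hσ1 _ (by rw [← hpσ]; exact (hE _ _).mpr e2)
    have : p - 1 = p + 1 := hπ (Set.mem_Iio.mpr (by omega)) (Set.mem_Iio.mpr (by omega))
      (c1.trans c2.symm)
    omega


/-! ### The equality criterion (part 2 of the theorem) -/

lemma bVec_eq_iff (h m k : ℕ) (hh : 1 ≤ h) (hmk : k + 2 ≤ m)
    (iI : ℕ → Fin m) (jJ : Fin k → Fin m)
    (hiInj : Set.InjOn iI (Set.Iio (m - k))) (hjInj : Function.Injective jJ)
    (hdisj : ∀ a < m - k, ∀ b : Fin k, iI a ≠ jJ b)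
    (π σ : (Fin k → ZMod 2) → ℕ → Fin m)
    (hπT : IsPermTuple m k iI π) (hσT : IsPermTuple m k iI σ) :
    bVec h m k jJ π = bVec h m k jJ σ ↔
      ∀ d : Fin k → ZMod 2,
        (∀ α < m - k, σ d α = π d α) ∨ (∀ α < m - k, σ d α = π d (m - k - 1 - α)) := by
  constructor
  · intro hvec d
    have hn2 : 2 ≤ m - k := by omega
    have key : ∀ z : Fin m → ZMod 2,
        (∑ α ∈ Finset.range (m - k - 1), (z (π d α)).val * (z (π d (α + 1))).val) % 2
          = (∑ α ∈ Finset.range (m - k - 1), (z (σ d α)).val * (z (σ d (α + 1))).val) % 2 := by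
      intro z
      set y : Fin m → ZMod 2 :=
        fun v => if hv : ∃ b, jJ b = v then d (Classical.choose hv) else z v with hy
      have hyJ : ∀ b, y (jJ b) = d b := by
        intro b
        have hvb : ∃ b', jJ b' = jJ b := ⟨b, rfl⟩
        have h1 : y (jJ b) = d (Classical.choose hvb) := dif_pos hvb
        rw [h1, hjInj (Classical.choose_spec hvb)]
      have hyd : (fun b => y (jJ b)) = d := funext hyJ
      have hyI : ∀ v, v < m - k → y (iI v) = z (iI v) := by
        intro v hv
        have hne : ¬ ∃ b, jJ b = iI v := by
          rintro ⟨b, hb⟩; exact hdisj v hv b hb.symm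
        exact dif_neg hne
      have hyτ : ∀ τ : (Fin k → ZMod 2) → ℕ → Fin m, IsPermTuple m k iI τ →
          ∀ α, α < m - k → y (τ d α) = z (τ d α) := by
        intro τ hτ α hα
        have hmem : τ d α ∈ iI '' Set.Iio (m - k) := by
          rw [← (hτ d).2]; exact Set.mem_image_of_mem _ (Set.mem_Iio.mpr hα)
        obtain ⟨v, hv, hveq⟩ := hmem
        rw [← hveq]; exact hyI v (Set.mem_Iio.mp hv)
      have hsumτ : ∀ τ : (Fin k → ZMod 2) → ℕ → Fin m, IsPermTuple m k iI τ →
          (∑ α ∈ Finset.range (m - k - 1), (y (τ d α)).val * (y (τ d (α + 1))).val)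
            = ∑ α ∈ Finset.range (m - k - 1), (z (τ d α)).val * (z (τ d (α + 1))).val := by
        intro τ hτ
        refine Finset.sum_congr rfl fun α hα => ?_
        have hr := Finset.mem_range.mp hα
        rw [hyτ τ hτ α (by omega), hyτ τ hτ (α + 1) (by omega)]
      obtain ⟨i, hi⟩ := bits_surj m y
      have hv := congrFun hvec i
      rw [show bVec h m k jJ π i = bFun h m k jJ π (bits m i.val) from rfl,
        show bVec h m k jJ σ i = bFun h m k jJ σ (bits m i.val) from rfl, hi,
        bFun_eval, bFun_eval, hyd] at hv
      have hmods := (two_pow_cast_eq_iff hh).mp hv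
      rw [hsumτ π hπT, hsumτ σ hσT] at hmods
      exact hmods
    have hEdge : ∀ a b, Edge (m - k) (σ d) a b ↔ Edge (m - k) (π d) a b := by
      intro a b
      by_cases hab : a = b
      · subst hab
        exact iff_of_false (edge_no_loop (hσT d).1 a) (edge_no_loop (hπT d).1 a)
      · have hz := key (fun v => if v = a ∨ v = b then (1 : ZMod 2) else 0)
        rw [sum_indicator_eq_edge (hπT d).1 hab, sum_indicator_eq_edge (hσT d).1 hab] at hz
        by_cases h1 : Edge (m - k) (π d) a b <;> by_cases h2 : Edge (m - k) (σ d) a b <;>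
          simp [h1, h2] at hz ⊢
    exact path_rigid hn2 (hπT d).1 (hσT d).1 ((hσT d).2.trans (hπT d).2.symm) hEdge
  · intro hrel
    funext i
    show bFun h m k jJ π (bits m i.val) = bFun h m k jJ σ (bits m i.val)
    rw [bFun_eval, bFun_eval]
    set y := bits m i.val with hy
    set d : Fin k → ZMod 2 := fun b => y (jJ b) with hd
    have hsum : (∑ α ∈ Finset.range (m - k - 1), (y (σ d α)).val * (y (σ d (α + 1))).val)
        = ∑ α ∈ Finset.range (m - k - 1), (y (π d α)).val * (y (π d (α + 1))).val := by
      rcases hrel d with hc | hc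
      · refine Finset.sum_congr rfl fun α hα => ?_
        have hr := Finset.mem_range.mp hα
        rw [hc α (by omega), hc (α + 1) (by omega)]
      · calc (∑ α ∈ Finset.range (m - k - 1), (y (σ d α)).val * (y (σ d (α + 1))).val)
            = ∑ α ∈ Finset.range (m - k - 1),
                (fun β => (y (π d β)).val * (y (π d (β + 1))).val) ((m - k - 1) - 1 - α) := by
              refine Finset.sum_congr rfl fun α hα => ?_
              have hr := Finset.mem_range.mp hα
              simp only []
              rw [hc α (by omega), hc (α + 1) (by omega),
                show m - k - 1 - 1 - α = m - k - 1 - (α + 1) by omega,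
                show m - k - 1 - (α + 1) + 1 = m - k - 1 - α by omega, mul_comm]
          _ = _ := by
              simpa using Finset.sum_range_reflect (fun β => (y (π d β)).val * (y (π d (β + 1))).val) (m - k - 1)
    rw [hsum]


/-! ### Tuples of bijections coming from permutations -/

/-- The bijection `{0,…,n-1} → I` induced by a permutation `e` of `Fin n`. -/
def ofPerm (n : ℕ) (iI : ℕ → Fin m) (e : Equiv.Perm (Fin n)) : ℕ → Fin m :=
  fun α => if hα : α < n then iI ((e ⟨α, hα⟩ : Fin n) : ℕ) else iI 0

lemma ofPerm_apply_lt {n : ℕ} (iI : ℕ → Fin m) (e : Equiv.Perm (Fin n)) {α : ℕ} (hα : α < n) :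
    ofPerm n iI e α = iI ((e ⟨α, hα⟩ : Fin n) : ℕ) := dif_pos hα

/-- The order-reversing permutation of `Fin n`. -/
def revPerm (n : ℕ) : Equiv.Perm (Fin n) :=
  Function.Involutive.toPerm (fun a => ⟨n - 1 - a.val, by have := a.isLt; omega⟩)
    (fun a => by
      apply Fin.ext
      show n - 1 - (n - 1 - a.val) = a.val
      have := a.isLt; omega)

lemma revPerm_apply (n : ℕ) (a : Fin n) : ((revPerm n a : Fin n) : ℕ) = n - 1 - a.val := rfl

lemma revPerm_ne_one {n : ℕ} (hn : 2 ≤ n) : revPerm n ≠ 1 := by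
  intro hc
  have h0 : ((revPerm n ⟨0, by omega⟩ : Fin n) : ℕ) = 0 := by rw [hc]; rfl
  rw [revPerm_apply] at h0
  have h1 : n - 1 - 0 = 0 := h0
  omega

lemma ofPerm_injOn {n : ℕ} {iI : ℕ → Fin m} (hiInj : Set.InjOn iI (Set.Iio n))
    (e : Equiv.Perm (Fin n)) : Set.InjOn (ofPerm n iI e) (Set.Iio n) := by
  intro x hx y hy hxy
  rw [Set.mem_Iio] at hx hy
  rw [ofPerm_apply_lt iI e hx, ofPerm_apply_lt iI e hy] at hxy
  have h1 := hiInj (Set.mem_Iio.mpr (e ⟨x, hx⟩).isLt) (Set.mem_Iio.mpr (e ⟨y, hy⟩).isLt) hxy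
  have h2 : (⟨x, hx⟩ : Fin n) = ⟨y, hy⟩ := e.injective (Fin.ext h1)
  exact congrArg Fin.val h2

lemma ofPerm_image {n : ℕ} (iI : ℕ → Fin m) (e : Equiv.Perm (Fin n)) :
    ofPerm n iI e '' Set.Iio n = iI '' Set.Iio n := by
  ext x
  constructor
  · rintro ⟨α, hα, rfl⟩
    rw [Set.mem_Iio] at hα
    rw [ofPerm_apply_lt iI e hα]
    exact Set.mem_image_of_mem _ (Set.mem_Iio.mpr (e ⟨α, hα⟩).isLt)
  · rintro ⟨v, hv, rfl⟩
    rw [Set.mem_Iio] at hv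
    refine ⟨((e.symm ⟨v, hv⟩ : Fin n) : ℕ), Set.mem_Iio.mpr (e.symm ⟨v, hv⟩).isLt, ?_⟩
    rw [ofPerm_apply_lt iI e (e.symm ⟨v, hv⟩).isLt]
    congr 1
    rw [Fin.eta, Equiv.apply_symm_apply]

lemma ofPerm_eq_iff {n : ℕ} {iI : ℕ → Fin m} (hiInj : Set.InjOn iI (Set.Iio n))
    (e f : Equiv.Perm (Fin n)) :
    (∀ α < n, ofPerm n iI f α = ofPerm n iI e α) ↔ f = e := by
  constructor
  · intro hall
    apply Equiv.ext
    intro a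
    have := hall a.val a.isLt
    rw [ofPerm_apply_lt iI f a.isLt, ofPerm_apply_lt iI e a.isLt] at this
    have h1 := hiInj (Set.mem_Iio.mpr (f ⟨a.val, a.isLt⟩).isLt)
      (Set.mem_Iio.mpr (e ⟨a.val, a.isLt⟩).isLt) this
    rw [Fin.eta] at h1
    exact Fin.ext h1
  · rintro rfl _ _; rfl

lemma ofPerm_rev_iff {n : ℕ} {iI : ℕ → Fin m} (hiInj : Set.InjOn iI (Set.Iio n))
    (e f : Equiv.Perm (Fin n)) :
    (∀ α < n, ofPerm n iI f α = ofPerm n iI e (n - 1 - α)) ↔ f = e * revPerm n := by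
  have hrev : ∀ α (hα : α < n), ofPerm n iI e (n - 1 - α) = iI (((e * revPerm n) ⟨α, hα⟩ : Fin n) : ℕ) := by
    intro α hα
    rw [ofPerm_apply_lt iI e (show n - 1 - α < n by omega)]
    rfl
  constructor
  · intro hall
    apply Equiv.ext
    intro a
    have := hall a.val a.isLt
    rw [ofPerm_apply_lt iI f a.isLt, hrev a.val a.isLt] at this
    have h1 := hiInj (Set.mem_Iio.mpr (f ⟨a.val, a.isLt⟩).isLt)
      (Set.mem_Iio.mpr ((e * revPerm n) ⟨a.val, a.isLt⟩).isLt) this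
    rw [Fin.eta] at h1
    exact Fin.ext h1
  · rintro rfl α hα
    rw [ofPerm_apply_lt iI (e * revPerm n) hα, hrev α hα]

end Stmt12Aux
open Stmt12Aux in
/-- `|R_{2^h}(k,m)| = ((m-k)!/2)^{2^k}`; equivalently, two tuples of bijections yield the same
vector iff for each `d` the second is the first or its reversal. -/
theorem stmt_12 (h m k : ℕ) (hh : 1 ≤ h) (hmk : k + 2 ≤ m)
    (iI : ℕ → Fin m) (jJ : Fin k → Fin m)
    (hiInj : Set.InjOn iI (Set.Iio (m - k))) (hjInj : Function.Injective jJ)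
    (hdisj : ∀ a < m - k, ∀ b : Fin k, iI a ≠ jJ b)
    (hcover : ∀ v : Fin m, (∃ a < m - k, iI a = v) ∨ ∃ b : Fin k, jJ b = v) :
    Nat.card {v : Fin (2 ^ m) → ZMod (2 ^ h) |
        ∃ π : (Fin k → ZMod 2) → ℕ → Fin m, IsPermTuple m k iI π ∧ v = bVec h m k jJ π}
      = ((m - k).factorial / 2) ^ (2 ^ k) ∧
    ∀ π σ : (Fin k → ZMod 2) → ℕ → Fin m, IsPermTuple m k iI π → IsPermTuple m k iI σ →
      (bVec h m k jJ π = bVec h m k jJ σ ↔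
        ∀ d : Fin k → ZMod 2,
          (∀ α < m - k, σ d α = π d α) ∨ (∀ α < m - k, σ d α = π d (m - k - 1 - α))) := by
  classical
  have hn2 : 2 ≤ m - k := by omega
  have part2 : ∀ π σ : (Fin k → ZMod 2) → ℕ → Fin m,
      IsPermTuple m k iI π → IsPermTuple m k iI σ →
      (bVec h m k jJ π = bVec h m k jJ σ ↔
        ∀ d : Fin k → ZMod 2,
          (∀ α < m - k, σ d α = π d α) ∨ (∀ α < m - k, σ d α = π d (m - k - 1 - α))) :=
    fun π σ hπT hσT => bVec_eq_iff h m k hh hmk iI jJ hiInj hjInj hdisj π σ hπT hσT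
  refine ⟨?_, part2⟩
  haveI : NeZero (2 ^ h) := ⟨by positivity⟩
  set F : ((Fin k → ZMod 2) → Equiv.Perm (Fin (m - k))) → (Fin (2 ^ m) → ZMod (2 ^ h)) :=
    fun ρ => bVec h m k jJ (fun d => ofPerm (m - k) iI (ρ d)) with hF
  have hρT : ∀ ρ : (Fin k → ZMod 2) → Equiv.Perm (Fin (m - k)),
      IsPermTuple m k iI (fun d => ofPerm (m - k) iI (ρ d)) :=
    fun ρ d => ⟨ofPerm_injOn hiInj (ρ d), ofPerm_image iI (ρ d)⟩
  -- the set in question is the range of `F`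
  have hSet : {v : Fin (2 ^ m) → ZMod (2 ^ h) |
      ∃ π : (Fin k → ZMod 2) → ℕ → Fin m, IsPermTuple m k iI π ∧ v = bVec h m k jJ π}
      = Set.range F := by
    ext v
    simp only [Set.mem_setOf_eq, Set.mem_range]
    constructor
    · rintro ⟨π, hπT, rfl⟩
      have hchoice : ∀ (d : Fin k → ZMod 2) (a : Fin (m - k)),
          ∃ w, w < m - k ∧ iI w = π d a.val := by
        intro d a
        have hmem : π d a.val ∈ iI '' Set.Iio (m - k) := by
          rw [← (hπT d).2]
          exact Set.mem_image_of_mem _ (Set.mem_Iio.mpr a.isLt)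
        obtain ⟨w, hw, hweq⟩ := hmem
        exact ⟨w, Set.mem_Iio.mp hw, hweq⟩
      set f : (Fin k → ZMod 2) → Fin (m - k) → Fin (m - k) :=
        fun d a => ⟨(hchoice d a).choose, (hchoice d a).choose_spec.1⟩ with hf
      have hfspec : ∀ d a, iI ((f d a : Fin (m - k)) : ℕ) = π d a.val :=
        fun d a => (hchoice d a).choose_spec.2
      have hfinj : ∀ d, Function.Injective (f d) := by
        intro d a b hab
        have h1 : π d a.val = π d b.val := by
          rw [← hfspec d a, ← hfspec d b, hab]
        have h2 := (hπT d).1 (Set.mem_Iio.mpr a.isLt) (Set.mem_Iio.mpr b.isLt) h1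
        exact Fin.ext h2
      refine ⟨fun d => Equiv.ofBijective (f d) (Finite.injective_iff_bijective.mp (hfinj d)), ?_⟩
      refine (part2 _ π (hρT _) hπT).mpr ?_
      intro d
      left
      intro α hα
      rw [ofPerm_apply_lt iI _ hα]
      rw [Equiv.ofBijective_apply]
      exact (hfspec d ⟨α, hα⟩).symm
    · rintro ⟨ρ, rfl⟩
      exact ⟨_, hρT ρ, rfl⟩
  have hkey : ∀ ρ ρ' : (Fin k → ZMod 2) → Equiv.Perm (Fin (m - k)),
      F ρ = F ρ' ↔ ∀ d, ρ' d = ρ d ∨ ρ' d = ρ d * revPerm (m - k) := by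
    intro ρ ρ'
    rw [hF]
    rw [part2 _ _ (hρT ρ) (hρT ρ')]
    refine forall_congr' fun d => or_congr ?_ ?_
    · exact ofPerm_eq_iff hiInj (ρ d) (ρ' d)
    · exact ofPerm_rev_iff hiInj (ρ d) (ρ' d)
  rw [hSet, show Set.range F = ↑(Finset.image F Finset.univ) by
    rw [Finset.coe_image, Finset.coe_univ, Set.image_univ],
    Nat.card_coe_set_eq, Set.ncard_coe_finset]
  have hfiber : ∀ v ∈ Finset.image F Finset.univ,
      (Finset.filter (fun ρ => F ρ = v) Finset.univ).card = 2 ^ (2 ^ k) := by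
    intro v hv
    obtain ⟨ρ0, -, hρ0⟩ := Finset.mem_image.mp hv
    have hne : ∀ d, ρ0 d ≠ ρ0 d * revPerm (m - k) := by
      intro d hEq
      exact revPerm_ne_one hn2 (left_eq_mul.mp hEq)
    have hflt : Finset.filter (fun ρ => F ρ = v) Finset.univ
        = Fintype.piFinset (fun d => ({ρ0 d, ρ0 d * revPerm (m - k)} :
            Finset (Equiv.Perm (Fin (m - k))))) := by
      ext ρ'
      simp only [Finset.mem_filter, Finset.mem_univ, true_and, Fintype.mem_piFinset,
        Finset.mem_insert, Finset.mem_singleton]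
      constructor
      · intro hFe
        exact fun d => (hkey ρ0 ρ').mp (hρ0.trans hFe.symm) d
      · intro hall
        exact ((hkey ρ0 ρ').mpr hall).symm.trans hρ0
    rw [hflt, Fintype.card_piFinset]
    have hcard2 : ∀ d : Fin k → ZMod 2,
        ({ρ0 d, ρ0 d * revPerm (m - k)} : Finset (Equiv.Perm (Fin (m - k)))).card = 2 := by
      intro d
      rw [Finset.card_insert_of_notMem (by simp [hne d]), Finset.card_singleton]
    rw [Finset.prod_congr rfl (fun d _ => hcard2 d), Finset.prod_const, Finset.card_univ]
    congr 1
    rw [Fintype.card_fun, ZMod.card, Fintype.card_fin]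
  have htotal := Finset.card_eq_sum_card_fiberwise (f := F)
    (s := Finset.univ) (t := Finset.image F Finset.univ)
    (fun ρ _ => Finset.mem_image_of_mem F (Finset.mem_univ ρ))
  rw [Finset.sum_congr rfl hfiber, Finset.sum_const, smul_eq_mul, Finset.card_univ] at htotal
  have hDcard : Fintype.card ((Fin k → ZMod 2) → Equiv.Perm (Fin (m - k)))
      = ((m - k).factorial) ^ (2 ^ k) := by
    rw [Fintype.card_fun, Fintype.card_perm, Fintype.card_fin]
    congr 1
    rw [Fintype.card_fun, ZMod.card, Fintype.card_fin]
  have h2div : 2 ∣ (m - k).factorial := Nat.dvd_factorial (by omega) (by omega)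
  have hfinal : (Finset.image F Finset.univ).card * 2 ^ (2 ^ k)
      = ((m - k).factorial / 2) ^ (2 ^ k) * 2 ^ (2 ^ k) := by
    rw [← htotal, hDcard, ← mul_pow, Nat.div_mul_cancel h2div]
  exact Nat.eq_of_mul_eq_mul_right (by positivity) hfinal
end
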